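/- arXiv:1504.01426 — 7 statements merged into one kernel-verified Lean document; each statement's English description precedes it below -/
import Mathlib

section
/- For all integers m ≥ 1, n ≥ 1, and every natural number x, one has (x^{\underline m})^n = Σ_{k=m}^{mn} N_m(n,k) · C(x,k), where C(x,k) is the binomial coefficient. (Equivalently, (x^{\underline m})^n = Σ_{k=m}^{mn} {n,k}_m · x^{\underline k}, where {n,k}_m = N_m(n,k)/k!.) -/
/-- `Nm m n k` is the number of `n`-tuples `(Y 1, ..., Y n)` of injective functions
`Y j : Fin m → Fin k` such that every element of `Fin k` lies in the image of at least
one `Y j`. -/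
noncomputable def Nm (m n k : ℕ) : ℕ :=
  Nat.card {Y : Fin n → (Fin m → Fin k) //
    (∀ j, Function.Injective (Y j)) ∧ ∀ x : Fin k, ∃ j i, Y j i = x}

lemma Nm_eq_zero_of_lt {m n k : ℕ} (hn : 1 ≤ n) (hk : k < m) : Nm m n k = 0 := by
  rw [Nm, Nat.card_eq_zero]
  left
  constructor
  rintro ⟨Y, hinj, -⟩
  have := Fintype.card_le_of_injective _ (hinj ⟨0, hn⟩)
  simp at this
  omega

lemma Nm_eq_zero_of_gt {m n k : ℕ} (hk : m * n < k) : Nm m n k = 0 := by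
  rw [Nm, Nat.card_eq_zero]
  left
  constructor
  rintro ⟨Y, -, hsurj⟩
  have : Function.Surjective (fun p : Fin n × Fin m => Y p.1 p.2) := by
    intro a; obtain ⟨j, i, h⟩ := hsurj a; exact ⟨(j, i), h⟩
  have := Fintype.card_le_of_surjective _ this
  simp at this
  rw [Nat.mul_comm m n] at hk
  omega

/-- Fiber equivalence: tuples of injections into `Fin x` whose union of images is
exactly `s` correspond to covering tuples of injections into `Fin s.card`. -/
noncomputable def fiberEquiv (m n x : ℕ) (s : Finset (Fin x)) :
    {Y : Fin n → (Fin m → Fin x) // (∀ j, Function.Injective (Y j)) ∧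
      ∀ a : Fin x, a ∈ s ↔ ∃ j i, Y j i = a} ≃
    {Z : Fin n → (Fin m → Fin s.card) // (∀ j, Function.Injective (Z j)) ∧
      ∀ b : Fin s.card, ∃ j i, Z j i = b} where
  toFun Y := by
    refine ⟨fun j i => s.equivFin ⟨Y.1 j i, (Y.2.2 _).2 ⟨j, i, rfl⟩⟩, ?_, ?_⟩
    · intro j a b hab
      exact Y.2.1 j (Subtype.mk_eq_mk.1 (s.equivFin.injective hab))
    · intro b
      obtain ⟨j, i, hj⟩ := (Y.2.2 (s.equivFin.symm b : s)).1 (s.equivFin.symm b).2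
      exact ⟨j, i, (congrArg s.equivFin (Subtype.ext hj)).trans (s.equivFin.apply_symm_apply b)⟩
  invFun Z := by
    refine ⟨fun j i => (s.equivFin.symm (Z.1 j i) : Fin x), fun j a b hab => ?_, ?_⟩
    · exact Z.2.1 j (s.equivFin.symm.injective (Subtype.ext hab))
    · intro a
      constructor
      · intro ha
        obtain ⟨j, i, hj⟩ := Z.2.2 (s.equivFin ⟨a, ha⟩)
        exact ⟨j, i, by show ((s.equivFin.symm (Z.1 j i) : s) : Fin x) = a; rw [hj]; simp⟩
      · rintro ⟨j, i, rfl⟩; exact (s.equivFin.symm (Z.1 j i)).2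
  left_inv Y := by
    ext j i
    simp
  right_inv Z := by
    ext j i
    simp

/-- `(x^{\underline m})^n = Σ_{k=m}^{mn} N_m(n,k) · C(x,k)`. -/
theorem stmt2 (m n x : ℕ) (hm : 1 ≤ m) (hn : 1 ≤ n) :
    (Nat.descFactorial x m) ^ n =
      ∑ k ∈ Finset.Icc m (m * n), Nm m n k * Nat.choose x k := by
  classical
  -- The LHS counts `n`-tuples of injections `Fin m → Fin x`.
  have h1 : (Nat.descFactorial x m) ^ n =
      Fintype.card {Y : Fin n → (Fin m → Fin x) // ∀ j, Function.Injective (Y j)} := by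
    rw [Fintype.card_congr (show {Y : Fin n → (Fin m → Fin x) // ∀ j, Function.Injective (Y j)}
      ≃ (Fin n → (Fin m ↪ Fin x)) from
      { toFun := fun Y j => ⟨Y.1 j, Y.2 j⟩
        invFun := fun Y => ⟨fun j => Y j, fun j => (Y j).injective⟩
        left_inv := fun Y => rfl
        right_inv := fun Y => rfl })]
    simp [Fintype.card_embedding_eq]
  -- The fiber over a set `s` (tuples with union of images equal to `s`) has `Nm m n s.card`
  -- elements.
  have h2 : ∀ s : Finset (Fin x),
      Fintype.card {Y : Fin n → (Fin m → Fin x) // (∀ j, Function.Injective (Y j)) ∧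
        (Finset.univ.filter fun a => ∃ j i, Y j i = a) = s} = Nm m n s.card := by
    intro s
    rw [Nm, Nat.card_eq_fintype_card]
    refine Fintype.card_congr ((Equiv.subtypeEquivRight ?_).trans (fiberEquiv m n x s))
    intro Y
    refine and_congr_right fun _ => ?_
    rw [Finset.ext_iff]
    simp only [Finset.mem_filter, Finset.mem_univ, true_and]
    exact forall_congr' fun a => Iff.comm
  -- Partition the tuples by the union of the images.
  have h3 : Fintype.card {Y : Fin n → (Fin m → Fin x) // ∀ j, Function.Injective (Y j)} =
      ∑ s : Finset (Fin x), Nm m n s.card := by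
    rw [Fintype.card_subtype]
    rw [Finset.card_eq_sum_card_fiberwise
      (f := fun Y : Fin n → Fin m → Fin x => Finset.univ.filter fun a => ∃ j i, Y j i = a)
      (t := Finset.univ) (fun _ _ => Finset.mem_univ _)]
    refine Finset.sum_congr rfl fun s _ => ?_
    rw [← h2 s, Fintype.card_subtype]
    congr 1
    ext Y
    simp [and_assoc]
  rw [h1, h3]
  -- Group the sets by their cardinality.
  have h4 : ∑ s : Finset (Fin x), Nm m n s.card
      = ∑ k ∈ Finset.range (x + 1), Nm m n k * Nat.choose x k := by
    rw [← Finset.powerset_univ, Finset.sum_powerset]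
    simp only [Finset.card_univ, Fintype.card_fin]
    refine Finset.sum_congr rfl fun k _ => ?_
    rw [Finset.sum_powersetCard k Finset.univ (fun j => Nm m n j)]
    simp [mul_comm, Finset.card_univ]
  rw [h4]
  -- Finally adjust the summation range, using that the extra terms vanish.
  have e1 : ∑ k ∈ Finset.range (x + 1), Nm m n k * Nat.choose x k
      = ∑ k ∈ Finset.range (x + m * n + 1), Nm m n k * Nat.choose x k := by
    refine Finset.sum_subset ?_ ?_
    · intro k hk; simp only [Finset.mem_range] at hk ⊢; clear * - hk; omega
    · intro k hk1 hk2
      simp only [Finset.mem_range] at hk1 hk2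
      rw [Nat.choose_eq_zero_of_lt (by clear * - hk1 hk2; omega), mul_zero]
  have e2 : ∑ k ∈ Finset.Icc m (m * n), Nm m n k * Nat.choose x k
      = ∑ k ∈ Finset.range (x + m * n + 1), Nm m n k * Nat.choose x k := by
    refine Finset.sum_subset ?_ ?_
    · intro k hk; simp only [Finset.mem_Icc, Finset.mem_range] at hk ⊢; clear * - hk; omega
    · intro k hk1 hk2
      simp only [Finset.mem_Icc] at hk2
      rcases lt_or_ge k m with h | h
      · rw [Nm_eq_zero_of_lt hn h, zero_mul]
      · rw [Nm_eq_zero_of_gt (by clear * - hk2 h; omega), zero_mul]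
  rw [e1, e2]
end

section
/- For all integers m ≥ 1, n ≥ 1 and k ≥ m, the recurrence N_m(n+1,k) = Σ_{i=0}^{m} C(k+i−m, i) · m^{\underline i} · k^{\underline{m−i}} · N_m(n, k+i−m) holds. (Equivalently, in terms of {n,k}_m = N_m(n,k)/k!: {n+1,k}_m = Σ_{i=0}^{m} C(k+i−m,i) · m^{\underline i} · {n, k+i−m}_m.) -/
open Function Finset

theorem card_embedding_extending {α β γ : Type*} [Fintype α] [Fintype β] [Fintype γ]
    (g : γ ↪ α) (φ : γ ↪ β) :
    Nat.card {z : α ↪ β // ∀ c, z (g c) = φ c} =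
      (Fintype.card β - Fintype.card γ).descFactorial (Fintype.card α - Fintype.card γ) := by
  classical
  let split : α ≃ γ ⊕ ↥(Set.range g)ᶜ :=
    (Equiv.sumCompl (· ∈ Set.range g)).symm.trans
      (Equiv.sumCongr (Equiv.ofInjective g g.injective).symm (Equiv.refl _))
  let E := (Equiv.embeddingCongr split (Equiv.refl β)).trans
    Equiv.sumEmbeddingEquivSigmaEmbeddingRestricted
  have hE (z : α ↪ β) : (∀ c, z (g c) = φ c) ↔ (E z).1 = φ := by
    rw [Embedding.ext_iff]
    -- `(E z).1 c` unfolds to `z (split.symm (.inl c)) = z (g c)`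
    rfl
  rw [Nat.card_congr ((E.subtypeEquiv hE).trans (Equiv.sigmaSubtype φ)), Nat.card_eq_fintype_card,
    Fintype.card_embedding_eq, Fintype.card_compl_set, Fintype.card_compl_set,
    Fintype.card_range, Fintype.card_range]

noncomputable def embeddingRangeSupersetEquiv {α β : Type*} (F : Finset β) :
    {z : α ↪ β // ↑F ⊆ Set.range z} ≃ Σ g : F ↪ α, {z : α ↪ β // ∀ y, z (g y) = y} where
  toFun z := ⟨⟨fun y => (Equiv.ofInjective z.1 z.1.injective).symm ⟨y, z.2 y.2⟩,
      fun y y' h => by simpa using (Equiv.ofInjective _ _).symm.injective h⟩,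
    z.1, fun y => Equiv.apply_ofInjective_symm z.1.injective _⟩
  invFun s := ⟨s.2.1, fun y hy => ⟨s.1 ⟨y, hy⟩, s.2.2 ⟨y, hy⟩⟩⟩
  left_inv z := rfl
  right_inv s := Sigma.subtype_ext
    (Embedding.ext fun y =>
      s.2.1.injective ((Equiv.apply_ofInjective_symm _ _).trans (s.2.2 y).symm))
    rfl

theorem card_embedding_range_superset {α β : Type*} [Fintype α] [Fintype β] (F : Finset β) :
    Nat.card {z : α ↪ β // ↑F ⊆ Set.range z} =
      (Fintype.card α).descFactorial #F *
        (Fintype.card β - #F).descFactorial (Fintype.card α - #F) := by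
  have extensions (g : F ↪ α) : Nat.card {z : α ↪ β // ∀ y, z (g y) = y} =
      (Fintype.card β - #F).descFactorial (Fintype.card α - #F) := by
    simpa using card_embedding_extending g (Embedding.subtype _)
  rw [Nat.card_congr (embeddingRangeSupersetEquiv F), Nat.card_sigma]
  simp only [extensions, sum_const, card_univ, Fintype.card_embedding_eq, Fintype.card_coe,
    smul_eq_mul]

section CoveredSet

variable {ι α β : Type*} [Fintype ι] [Fintype α] [DecidableEq β]

def coveredSet (Y : ι → α ↪ β) : Finset β := univ.biUnion fun i => univ.map (Y i)

@[simp]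
theorem mem_coveredSet {Y : ι → α ↪ β} {b : β} : b ∈ coveredSet Y ↔ ∃ i a, Y i a = b := by
  simp [coveredSet]

theorem coveredSet_eq_univ_iff [Fintype β] {Y : ι → α ↪ β} :
    coveredSet Y = univ ↔ ∀ b, ∃ i a, Y i a = b := by
  simp [eq_univ_iff_forall]

def coveredSetEqUnivCongr {γ : Type*} [Fintype β] [Fintype γ] [DecidableEq γ] (e : β ≃ γ) :
    {Y : ι → α ↪ β // coveredSet Y = univ} ≃ {Y : ι → α ↪ γ // coveredSet Y = univ} :=
  (Equiv.piCongrRight fun _ => Equiv.embeddingCongr (Equiv.refl α) e).subtypeEquiv fun Y => by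
    simp only [coveredSet_eq_univ_iff]
    rw [← e.forall_congr_right]
    simp

def coveredSetEqEquivSubtype (U : Finset β) :
    {Y : ι → α ↪ β // coveredSet Y = U} ≃ {Y : ι → α ↪ U // coveredSet Y = univ} where
  toFun Y := ⟨fun i => (Y.1 i).codRestrict _ fun a => by simp [← Y.2],
    coveredSet_eq_univ_iff.mpr fun b => by
      obtain ⟨i, a, h⟩ := mem_coveredSet.mp (Y.2.symm ▸ b.2 : (b : β) ∈ coveredSet Y.1)
      exact ⟨i, a, Subtype.ext h⟩⟩
  invFun Y := ⟨fun i => (Y.1 i).trans (Embedding.subtype _), by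
    ext b
    refine ⟨fun hb => ?_, fun hb => ?_⟩
    · obtain ⟨i, a, rfl⟩ := mem_coveredSet.mp hb
      exact (Y.1 i a).2
    · obtain ⟨i, a, h⟩ := coveredSet_eq_univ_iff.mp Y.2 ⟨b, hb⟩
      exact mem_coveredSet.mpr ⟨i, a, congrArg Subtype.val h⟩⟩
  left_inv Y := rfl
  right_inv Y := rfl

end CoveredSet

theorem Nm_eq_card_coveredSet_eq_univ (m n k : ℕ) :
    Nm m n k = Nat.card {Y : Fin n → Fin m ↪ Fin k // coveredSet Y = univ} :=
  Nat.card_congr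
    { toFun Y := ⟨fun j => ⟨Y.1 j, Y.2.1 j⟩, coveredSet_eq_univ_iff.mpr Y.2.2⟩
      invFun Y := ⟨fun j => Y.1 j, fun j => (Y.1 j).injective, coveredSet_eq_univ_iff.mp Y.2⟩
      left_inv _ := rfl
      right_inv _ := rfl }

theorem card_coveredSet_eq_Nm {β : Type*} [DecidableEq β] (m n : ℕ) (U : Finset β) :
    Nat.card {Y : Fin n → Fin m ↪ β // coveredSet Y = U} = Nm m n #U := by
  rw [Nm_eq_card_coveredSet_eq_univ,
    Nat.card_congr ((coveredSetEqEquivSubtype U).trans (coveredSetEqUnivCongr U.equivFin))]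

section Cons

variable {α β : Type*} [Fintype α] [Fintype β] [DecidableEq β]

theorem coveredSet_cons_eq_univ_iff {n : ℕ} (z : α ↪ β) (T : Fin n → α ↪ β) :
    coveredSet (Fin.cons z T : Fin (n + 1) → α ↪ β) = univ ↔
      ↑((coveredSet T)ᶜ) ⊆ Set.range z := by
  simp [coveredSet_eq_univ_iff, Set.subset_def, Fin.exists_fin_succ, or_iff_not_imp_right]

def coveredSetConsEquiv (n : ℕ) :
    {Y : Fin (n + 1) → α ↪ β // coveredSet Y = univ} ≃
      Σ T : Fin n → α ↪ β, {z : α ↪ β // ↑((coveredSet T)ᶜ) ⊆ Set.range z} where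
  toFun Y := ⟨Fin.tail Y.1, Y.1 0, by
    rw [← coveredSet_cons_eq_univ_iff, Fin.cons_self_tail]
    exact Y.2⟩
  invFun s := ⟨Fin.cons s.2.1 s.1, (coveredSet_cons_eq_univ_iff _ _).mpr s.2.2⟩
  left_inv Y := Subtype.ext (Fin.cons_self_tail Y.1)
  right_inv s := Sigma.subtype_ext rfl rfl

theorem card_coveredSet_succ_eq_univ (n : ℕ) :
    Nat.card {Y : Fin (n + 1) → α ↪ β // coveredSet Y = univ} =
      ∑ U : Finset β, Nat.card {T : Fin n → α ↪ β // coveredSet T = U} *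
        Nat.card {z : α ↪ β // ↑(Uᶜ) ⊆ Set.range z} := by
  rw [Nat.card_congr (coveredSetConsEquiv n), Nat.card_sigma]
  refine (Fintype.sum_fiberwise' (coveredSet : (Fin n → α ↪ β) → Finset β)
    fun U : Finset β => Nat.card {z : α ↪ β // ↑(Uᶜ) ⊆ Set.range z}).symm.trans ?_
  simp [Nat.card_eq_fintype_card]

end Cons

theorem Nm_succ (m n k : ℕ) :
    Nm m (n + 1) k = ∑ c ∈ range (k + 1),
      k.choose c * Nm m n c * m.descFactorial (k - c) * c.descFactorial (m - (k - c)) := by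
  have card_compl_compl (U : Finset (Fin k)) : k - (k - #U) = #U :=
    Nat.sub_sub_self (by simpa using card_le_univ U)
  rw [Nm_eq_card_coveredSet_eq_univ, card_coveredSet_succ_eq_univ]
  simp only [card_coveredSet_eq_Nm, card_embedding_range_superset, card_compl, Fintype.card_fin,
    card_compl_compl]
  rw [← powerset_univ, sum_powerset_apply_card
    (fun c => Nm m n c * (m.descFactorial (k - c) * c.descFactorial (m - (k - c))))]
  simp only [card_univ, Fintype.card_fin, smul_eq_mul, mul_assoc]

theorem choose_mul_descFactorial_mul_descFactorial (c i j : ℕ) :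
    (c + j).choose c * (i + j).descFactorial j * c.descFactorial i =
      c.choose i * (i + j).descFactorial i * (c + j).descFactorial j := by
  rw [Nat.descFactorial_eq_factorial_mul_choose, Nat.descFactorial_eq_factorial_mul_choose,
    Nat.descFactorial_eq_factorial_mul_choose, Nat.descFactorial_eq_factorial_mul_choose,
    Nat.choose_symm_add, @Nat.choose_symm_add i j]
  ring

theorem stmt3_general (m n k : ℕ) (hk : m ≤ k) :
    Nm m (n + 1) k =
      ∑ i ∈ Finset.range (m + 1),
        Nat.choose (k + i - m) i * Nat.descFactorial m i *
          Nat.descFactorial k (m - i) * Nm m n (k + i - m) := by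
  have vanish : ∀ c ∈ range (k + 1), c ∉ Ico (k - m) (k + 1) →
      k.choose c * Nm m n c * m.descFactorial (k - c) * c.descFactorial (m - (k - c)) = 0 := by
    intro c hc hc'
    simp only [mem_range, mem_Ico, not_and, not_lt] at hc hc'
    rw [Nat.descFactorial_eq_zero_iff_lt.mpr (by omega), mul_zero, zero_mul]
  rw [Nm_succ, ← sum_subset (fun c hc => mem_range.mpr (mem_Ico.mp hc).2) vanish,
    sum_Ico_eq_sum_range, show k + 1 - (k - m) = m + 1 by omega]
  refine sum_congr rfl fun i hi => ?_
  obtain ⟨j, rfl⟩ : ∃ j, m = i + j := ⟨m - i, by rw [mem_range] at hi; omega⟩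
  obtain ⟨c, rfl⟩ : ∃ c, k = c + j := ⟨k - j, by omega⟩
  rw [show c + j - (i + j) + i = c by omega, show c + j - c = j by omega,
    show i + j - j = i by omega, show c + j + i - (i + j) = c by omega, show i + j - i = j by omega,
    ← choose_mul_descFactorial_mul_descFactorial]
  ring

/-- The recurrence
`N_m(n+1,k) = Σ_{i=0}^{m} C(k+i-m, i) · m^{\underline i} · k^{\underline{m-i}} · N_m(n, k+i-m)`. -/
theorem stmt3 (m n k : ℕ) (hm : 1 ≤ m) (hn : 1 ≤ n) (hk : m ≤ k) :
    Nm m (n + 1) k =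
      ∑ i ∈ Finset.range (m + 1),
        Nat.choose (k + i - m) i * Nat.descFactorial m i *
          Nat.descFactorial k (m - i) * Nm m n (k + i - m) :=
  stmt3_general m n k hk
end

section
/- For all integers b ≥ 1 and n ≥ 1, the number of minimal crossing juggling card sequences with b balls and n cards equals the number of non-crossing partitions of {1,...,n} into exactly b nonempty blocks, i.e., partitions into b nonempty blocks for which there do not exist indices w < x < y < z with w and y in one block and x and z in a different block. -/
/-- Apply the maps `f 0`, `f 1`, ..., `f (n-1)` in order (with `f 0` applied first). -/
def compSeq {α : Type*} {n : ℕ} (f : Fin n → α → α) : α → α :=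
  fun x => (List.ofFn f).foldl (fun y g => g y) x

/-- The permutation (as a function) of ball positions `0, ..., b-1` induced by the juggling
card `C_{i+1}`: the bottom ball (position `0`) is thrown to position `i`, positions
`1, ..., i` shift down by one, and positions above `i` are unchanged. -/
def cardFun {b : ℕ} (i : Fin b) (x : Fin b) : Fin b :=
  if x.val = 0 then i
  else if x.val ≤ i.val then ⟨x.val - 1, lt_of_le_of_lt (Nat.pred_le _) x.isLt⟩
  else x

/-- `A` is a minimal crossing juggling card sequence with `b` balls and `n` cards:
(cards are indexed `0, ..., b-1`, with index `i` representing the card `C_{i+1}`)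
some entry is the card `C_b`, the induced permutation is the identity, and the number of
crossings `Cr(A) = Σ (i_j - 1)` equals `b(b-1)`. -/
def IsMinCross {b n : ℕ} (A : Fin n → Fin b) : Prop :=
  (∃ j, (A j).val = b - 1) ∧ compSeq (fun j => cardFun (A j)) = id ∧
    (∑ j, (A j).val) = b * (b - 1)

namespace JCS


variable {b n : ℕ}

/-- the state after the first `t` cards: maps ball (initial position) to current position -/
def stA (A : Fin n → Fin b) (t : ℕ) (x : Fin b) : Fin b :=
  (((List.ofFn (fun j => cardFun (A j))).take t).foldl (fun y g => g y) x)

lemma stA_zero (A : Fin n → Fin b) (x : Fin b) : stA A 0 x = x := rfl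

lemma stA_succ (A : Fin n → Fin b) {t : ℕ} (h : t < n) (x : Fin b) :
    stA A (t + 1) x = cardFun (A ⟨t, h⟩) (stA A t x) := by
  unfold stA
  rw [List.take_succ]
  have hlen : t < (List.ofFn (fun j => cardFun (A j))).length := by simpa using h
  rw [List.getElem?_eq_getElem hlen, List.getElem_ofFn]
  simp [List.foldl_append]

lemma stA_top (A : Fin n → Fin b) : compSeq (fun j => cardFun (A j)) = stA A n := by
  funext x
  unfold compSeq stA
  rw [List.take_of_length_le (by simp)]

/-- value of `cardFun` by cases -/
lemma cardFun_val (i : Fin b) (x : Fin b) :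
    (cardFun i x).val = if x.val = 0 then i.val else if x.val ≤ i.val then x.val - 1 else x.val := by
  unfold cardFun; split_ifs <;> rfl

lemma cardFun_injective (i : Fin b) : Function.Injective (cardFun i) := by
  intro x y hxy
  have h := congrArg Fin.val hxy
  rw [cardFun_val, cardFun_val] at h
  apply Fin.ext
  have hi := i.isLt
  have hx := x.isLt
  have hy := y.isLt
  split_ifs at h <;> omega

lemma stA_of_le (A : Fin n → Fin b) {t : ℕ} (h : n ≤ t) (x : Fin b) :
    stA A t x = stA A n x := by
  unfold stA
  rw [List.take_of_length_le (by simp; omega), List.take_of_length_le (by simp)]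

lemma stA_injective (A : Fin n → Fin b) (t : ℕ) : Function.Injective (stA A t) := by
  induction t with
  | zero => intro x y h; simpa [stA_zero] using h
  | succ t ih =>
    by_cases h : t < n
    · intro x y hxy
      rw [stA_succ A h, stA_succ A h] at hxy
      exact ih (cardFun_injective _ hxy)
    · intro x y hxy
      rw [stA_of_le A (by omega) x, stA_of_le A (by omega) y,
        ← stA_of_le A (le_of_not_gt h) x, ← stA_of_le A (le_of_not_gt h) y] at hxy
      exact ih hxy

lemma stA_bijective (A : Fin n → Fin b) (t : ℕ) : Function.Bijective (stA A t) :=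
  (Finite.injective_iff_bijective).mp (stA_injective A t)



variable {b n : ℕ}

/-- bottom-ball functions corresponding to noncrossing partitions with `b` blocks,
labelled in order of first appearance -/
def IsNCB (B : Fin n → Fin b) : Prop :=
  (∀ t : Fin n, ∀ k : Fin b, k < B t → ∃ s, s < t ∧ B s = k) ∧
  (∀ k : Fin b, ∃ t, B t = k) ∧
  ¬ ∃ s t u v : Fin n, s < t ∧ t < u ∧ u < v ∧ B s = B u ∧ B t = B v ∧ B s ≠ B t

def fiber (B : Fin n → Fin b) (u : Fin b) : Finset (Fin n) :=
  Finset.univ.filter (fun t => B t = u)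

lemma mem_fiber {B : Fin n → Fin b} {u : Fin b} {t : Fin n} :
    t ∈ fiber B u ↔ B t = u := by simp [fiber]

section TauSection

variable (B : Fin n → Fin b) (hs : ∀ u, (fiber B u).Nonempty)

/-- min of the fiber -/
def mn (u : Fin b) : Fin n := (fiber B u).min' (hs u)

/-- max of the fiber -/
def mx (u : Fin b) : Fin n := (fiber B u).max' (hs u)

/-- elements of `fiber u` before `min (fiber v)` -/
def tauF (u v : Fin b) : Finset (Fin n) :=
  (fiber B u).filter (fun x => x < mn B hs v)

/-- the time at which ball `u` is thrown over ball `v` -/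
def tau (u v : Fin b) : Fin n :=
  if h : (tauF B hs u v).Nonempty then (tauF B hs u v).max' h
  else mx B hs u

/-- `v` is below `u` at time `t` -/
def dd (u v : Fin b) (t : ℕ) : Bool :=
  xor (decide (v < u))
    (xor (decide ((tau B hs u v).val < t)) (decide ((tau B hs v u).val < t)))

/-- predicted position of ball `u` at time `t` -/
def pos (t : ℕ) (u : Fin b) : ℕ :=
  (Finset.univ.filter (fun v => v ≠ u ∧ dd B hs u v t = true)).card

variable {B hs}

lemma mn_mem (u : Fin b) : mn B hs u ∈ fiber B u := Finset.min'_mem _ _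
lemma mx_mem (u : Fin b) : mx B hs u ∈ fiber B u := Finset.max'_mem _ _
lemma B_mn (u : Fin b) : B (mn B hs u) = u := mem_fiber.mp (mn_mem u)
lemma B_mx (u : Fin b) : B (mx B hs u) = u := mem_fiber.mp (mx_mem u)
lemma mn_le {u : Fin b} {t : Fin n} (h : t ∈ fiber B u) : mn B hs u ≤ t :=
  Finset.min'_le _ _ h
lemma le_mx {u : Fin b} {t : Fin n} (h : t ∈ fiber B u) : t ≤ mx B hs u :=
  Finset.le_max' _ _ h

lemma mem_tauF {u v : Fin b} {x : Fin n} :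
    x ∈ tauF B hs u v ↔ x ∈ fiber B u ∧ x < mn B hs v := Finset.mem_filter

lemma fiber_disj {u v : Fin b} {t : Fin n} (h : t ∈ fiber B u) (h' : t ∈ fiber B v) : u = v := by
  rw [mem_fiber] at h h'; rw [← h, h']

lemma tau_mem (u v : Fin b) : tau B hs u v ∈ fiber B u := by
  unfold tau
  split_ifs with h
  · exact (mem_tauF.mp (Finset.max'_mem _ h)).1
  · exact mx_mem u

lemma B_tau (u v : Fin b) : B (tau B hs u v) = u := mem_fiber.mp (tau_mem u v)

lemma mn_ne {u v : Fin b} (h : u ≠ v) : mn B hs u ≠ mn B hs v := by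
  intro he
  apply h
  have h1 := B_mn (hs := hs) u
  have h2 := B_mn (hs := hs) v
  rw [he, h2] at h1
  exact h1.symm

/-- if the filter is nonempty with max `s`, `tau u v = s` -/
lemma tau_eq_of {u v : Fin b} {s : Fin n} (h1 : s ∈ fiber B u) (h2 : s < mn B hs v)
    (h3 : ∀ x ∈ fiber B u, x < mn B hs v → x ≤ s) : tau B hs u v = s := by
  have hne : (tauF B hs u v).Nonempty := ⟨s, mem_tauF.mpr ⟨h1, h2⟩⟩
  unfold tau
  rw [dif_pos hne]
  apply le_antisymm
  · apply Finset.max'_le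
    intro y hy
    have := mem_tauF.mp hy
    exact h3 y this.1 this.2
  · exact Finset.le_max' _ _ (mem_tauF.mpr ⟨h1, h2⟩)

lemma tau_eq_mx {u v : Fin b} (h : ∀ x ∈ fiber B u, ¬ x < mn B hs v) :
    tau B hs u v = mx B hs u := by
  unfold tau
  rw [dif_neg]
  rintro ⟨x, hx⟩
  have := mem_tauF.mp hx
  exact h x this.1 this.2

end TauSection



variable {b n : ℕ}

/-- `r` and `r'` are consecutive elements of the fiber of `v` -/
def Gap (B : Fin n → Fin b) (v : Fin b) (r r' : Fin n) : Prop :=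
  r ∈ fiber B v ∧ r' ∈ fiber B v ∧ r < r' ∧ ∀ x ∈ fiber B v, ¬(r < x ∧ x < r')

def NCprop (B : Fin n → Fin b) : Prop :=
  ¬ ∃ s t u v : Fin n, s < t ∧ t < u ∧ u < v ∧ B s = B u ∧ B t = B v ∧ B s ≠ B t

def FOprop (B : Fin n → Fin b) : Prop :=
  ∀ t : Fin n, ∀ k : Fin b, k < B t → ∃ s, s < t ∧ B s = k

section Geometry

variable {B : Fin n → Fin b} {hs : ∀ u, (fiber B u).Nonempty}

lemma gapClosed (hnc : NCprop B) {v w : Fin b} {r r' : Fin n} (hg : Gap B v r r')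
    (hvw : w ≠ v) {x : Fin n} (hx : x ∈ fiber B w) (hx1 : r < x) (hx2 : x < r') :
    ∀ z ∈ fiber B w, r < z ∧ z < r' := by
  obtain ⟨hr, hr', hrr', hcons⟩ := hg
  intro z hz
  rw [mem_fiber] at hx hz hr hr'
  by_contra hcon
  have hzr : z ≠ r := fun h => hvw (by rw [← hz, h, hr])
  have hzr' : z ≠ r' := fun h => hvw (by rw [← hz, h, hr'])
  have hxz : x ≠ z := by
    intro h; rw [h] at hx1 hx2; exact hcon ⟨hx1, hx2⟩
  rcases (not_and_or.mp hcon) with h | h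
  · have hzlt : z < r := lt_of_le_of_ne (not_lt.mp h) hzr
    exact hnc ⟨z, r, x, r', hzlt, hx1, hx2, by rw [hz, hx], by rw [hr, hr'],
      by rw [hz, hr]; exact fun h => hvw h⟩
  · have hzgt : r' < z := lt_of_le_of_ne (not_lt.mp h) (Ne.symm hzr')
    exact hnc ⟨r, x, r', z, hx1, hx2, hzgt, by rw [hr, hr'], by rw [hx, hz],
      by rw [hr, hx]; exact fun h => hvw h.symm⟩

/-- trichotomy: if `min v < min w` then `v` is entirely before `w`, or
`w` is nested in a gap of `v` -/
lemma tri (hnc : NCprop B) {v w : Fin b} (hvw : v ≠ w)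
    (hmn : mn B hs v < mn B hs w) :
    mx B hs v < mn B hs w ∨
      ∃ r r', Gap B v r r' ∧ ∀ z ∈ fiber B w, r < z ∧ z < r' := by
  by_cases hc : mx B hs v < mn B hs w
  · exact Or.inl hc
  right
  have hFne : (tauF B hs v w).Nonempty := ⟨mn B hs v, mem_tauF.mpr ⟨mn_mem v, hmn⟩⟩
  set r := (tauF B hs v w).max' hFne with hrdef
  have hrF := Finset.max'_mem _ hFne
  rw [mem_tauF] at hrF
  obtain ⟨hrfib, hrlt⟩ := hrF
  have hF'ne : ((fiber B v).filter (fun x => r < x)).Nonempty := by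
    refine ⟨mx B hs v, Finset.mem_filter.mpr ⟨mx_mem v, ?_⟩⟩
    exact lt_of_lt_of_le hrlt (not_lt.mp hc)
  set r' := ((fiber B v).filter (fun x => r < x)).min' hF'ne with hr'def
  have hr'F := Finset.min'_mem _ hF'ne
  rw [Finset.mem_filter] at hr'F
  obtain ⟨hr'fib, hrr'⟩ := hr'F
  have hcons : ∀ x ∈ fiber B v, ¬(r < x ∧ x < r') := by
    rintro x hx ⟨h1, h2⟩
    exact absurd (Finset.min'_le _ _ (Finset.mem_filter.mpr ⟨hx, h1⟩)) (not_le.mpr h2)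
  have hmnw : mn B hs w < r' := by
    rcases lt_trichotomy (mn B hs w) r' with h | h | h
    · exact h
    · exfalso
      apply hvw
      have h1 : B r' = v := mem_fiber.mp hr'fib
      have h2 : B (mn B hs w) = w := B_mn w
      rw [h] at h2
      exact h1.symm.trans h2
    · exact absurd (Finset.le_max' _ _ (mem_tauF.mpr ⟨hr'fib, h⟩)) (not_le.mpr hrr')
  have hg : Gap B v r r' := ⟨hrfib, hr'fib, hrr', hcons⟩
  exact ⟨r, r', hg, gapClosed hnc hg (Ne.symm hvw) (mn_mem w) hrlt hmnw⟩

lemma lt_iff_mn_lt (hfo : FOprop B) {u v : Fin b} :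
    u < v ↔ mn B hs u < mn B hs v := by
  have key : ∀ x y : Fin b, x < y → mn B hs x < mn B hs y := by
    intro x y hxy
    obtain ⟨s, hs1, hs2⟩ := hfo (mn B hs y) x (by
      have hy := B_mn (B := B) (hs := hs) y
      rw [hy]; exact hxy)
    exact lt_of_le_of_lt (mn_le (mem_fiber.mpr hs2)) hs1
  constructor
  · exact key u v
  · intro h
    rcases lt_trichotomy u v with h' | h' | h'
    · exact h'
    · exact absurd h (by rw [h']; exact lt_irrefl _)
    · exact absurd h (not_lt.mpr (le_of_lt (key v u h')))

end Geometry



variable {b n : ℕ}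

section Geometry2

variable {B : Fin n → Fin b} {hs : ∀ u, (fiber B u).Nonempty}

lemma dd_iff {u v : Fin b} {t : ℕ} :
    dd B hs u v t = true ↔
      ((v < u) ↔ (((tau B hs u v).val < t) ↔ ((tau B hs v u).val < t))) := by
  unfold dd
  by_cases h1 : v < u <;> by_cases h2 : (tau B hs u v).val < t <;>
    by_cases h3 : (tau B hs v u).val < t <;> simp [h1, h2, h3]

lemma dd_false_iff {u v : Fin b} {t : ℕ} :
    dd B hs u v t = false ↔
      ¬((v < u) ↔ (((tau B hs u v).val < t) ↔ ((tau B hs v u).val < t))) := by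
  rw [← dd_iff (hs := hs)]
  simp

lemma mn_le_mx (u : Fin b) : mn B hs u ≤ mx B hs u := mn_le (mx_mem u)

/-- if `v` is entirely before `w` -/
lemma tau_before {v w : Fin b} (h : mx B hs v < mn B hs w) :
    tau B hs v w = mx B hs v ∧ tau B hs w v = mx B hs w := by
  constructor
  · refine tau_eq_of (mx_mem v) (lt_of_le_of_lt (le_refl _) h) (fun x hx _ => le_mx hx)
  · refine tau_eq_mx (fun x hx hlt => ?_)
    have h1 : mn B hs v ≤ mx B hs v := mn_le_mx v
    have h2 : mn B hs w ≤ x := mn_le hx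
    exact absurd (lt_of_lt_of_le (lt_of_lt_of_le hlt (le_trans h1 (le_of_lt h))) h2)
      (lt_irrefl x)

/-- if `w` is nested in the gap `(r,r')` of `v` -/
lemma tau_nest {v w : Fin b} {r r' : Fin n} (hg : Gap B v r r')
    (hzw : ∀ z ∈ fiber B w, r < z ∧ z < r') :
    tau B hs v w = r ∧ tau B hs w v = mx B hs w := by
  obtain ⟨hr, hr', hrr', hcons⟩ := hg
  have hrmn : r < mn B hs w := (hzw _ (mn_mem w)).1
  have hmnr' : mn B hs w < r' := (hzw _ (mn_mem w)).2
  constructor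
  · refine tau_eq_of hr hrmn (fun x hx hlt => ?_)
    by_contra hc
    exact hcons x hx ⟨lt_of_not_ge hc, lt_trans hlt hmnr'⟩
  · refine tau_eq_mx (fun x hx hlt => ?_)
    have h1 : mn B hs v ≤ r := mn_le hr
    exact absurd (lt_of_le_of_lt h1 (hzw _ hx).1) (not_lt.mpr (le_of_lt hlt))

/-- Lemma I : at any time `t` when `u` is the bottom ball, every other ball is above `u`. -/
lemma lemI (hfo : FOprop B) (hnc : NCprop B) {u v : Fin b} {t : Fin n}
    (ht : t ∈ fiber B u) (hvu : v ≠ u) :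
    dd B hs u v t.val = false := by
  rw [dd_false_iff]
  have htmx : t ≤ mx B hs u := le_mx ht
  have htmn : mn B hs u ≤ t := mn_le ht
  rcases hvu.lt_or_gt with hlt | hlt
  · -- v < u : v's fiber began before u's
    have hmn : mn B hs v < mn B hs u := (lt_iff_mn_lt hfo (hs := hs)).mp hlt
    rcases tri hnc (hvw := hvu) hmn with hbef | ⟨r, r', hg, hzw⟩
    · -- v entirely before u
      obtain ⟨h1, h2⟩ := tau_before (hs := hs) hbef
      have hQ : ¬ (tau B hs u v).val < t.val := by
        rw [h2]; exact not_lt.mpr (Fin.le_def.mp htmx)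
      have hR : (tau B hs v u).val < t.val := by
        rw [h1]; exact Fin.lt_def.mp (lt_of_lt_of_le hbef htmn)
      simp [hlt, hQ, hR]
    · -- u nested in gap (r,r') of v
      obtain ⟨h1, h2⟩ := tau_nest (hs := hs) hg hzw
      have hrt : r < t := (hzw t ht).1
      have hQ : ¬ (tau B hs u v).val < t.val := by
        rw [h2]; exact not_lt.mpr (Fin.le_def.mp htmx)
      have hR : (tau B hs v u).val < t.val := by
        rw [h1]; exact Fin.lt_def.mp hrt
      simp [hlt, hQ, hR]
  · -- u < v
    have hnl : ¬ v < u := not_lt.mpr (le_of_lt hlt)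
    have hmn : mn B hs u < mn B hs v := (lt_iff_mn_lt hfo (hs := hs)).mp hlt
    rcases tri hnc (hvw := hvu.symm) hmn with hbef | ⟨s, s', hg, hzw⟩
    · -- u entirely before v
      obtain ⟨h1, h2⟩ := tau_before (hs := hs) hbef
      have hQ : ¬ (tau B hs u v).val < t.val := by
        rw [h1]; exact not_lt.mpr (Fin.le_def.mp htmx)
      have hR : ¬ (tau B hs v u).val < t.val := by
        rw [h2]
        have : t ≤ mx B hs v :=
          le_trans htmx (le_trans (le_of_lt hbef) (mn_le_mx v))
        exact not_lt.mpr (Fin.le_def.mp this)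
      simp [hnl, hQ, hR]
    · -- v nested in gap (s,s') of u
      obtain ⟨h1, h2⟩ := tau_nest (hs := hs) hg hzw
      have hmxv : mx B hs v < s' := (hzw _ (mx_mem v)).2
      have hsv : s < mx B hs v := lt_of_lt_of_le (hzw _ (mn_mem v)).1 (mn_le_mx v)
      have hts : t ≤ s ∨ s' ≤ t := by
        by_contra hc
        push_neg at hc
        exact hg.2.2.2 t ht ⟨hc.1, hc.2⟩
      rcases hts with h | h
      · have hQ : ¬ (tau B hs u v).val < t.val := by
          rw [h1]; exact not_lt.mpr (Fin.le_def.mp h)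
        have hR : ¬ (tau B hs v u).val < t.val := by
          rw [h2]; exact not_lt.mpr (Fin.le_def.mp (le_trans h (le_of_lt hsv)))
        simp [hnl, hQ, hR]
      · have hQ : (tau B hs u v).val < t.val := by
          rw [h1]; exact Fin.lt_def.mp (lt_of_lt_of_le (lt_trans hsv hmxv) h)
        have hR : (tau B hs v u).val < t.val := by
          rw [h2]; exact Fin.lt_def.mp (lt_of_lt_of_le hmxv h)
        simp [hnl, hQ, hR]

end Geometry2



variable {b n : ℕ}

section Geometry3

variable {B : Fin n → Fin b} {hs : ∀ u, (fiber B u).Nonempty}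

lemma next_gap {u : Fin b} {s : Fin n} (hsf : s ∈ fiber B u) (hlt : s < mx B hs u) :
    ∃ nt, Gap B u s nt := by
  have hF'ne : ((fiber B u).filter (fun x => s < x)).Nonempty :=
    ⟨mx B hs u, Finset.mem_filter.mpr ⟨mx_mem u, hlt⟩⟩
  refine ⟨((fiber B u).filter (fun x => s < x)).min' hF'ne, hsf, ?_, ?_, ?_⟩
  · exact (Finset.mem_filter.mp (Finset.min'_mem _ hF'ne)).1
  · exact (Finset.mem_filter.mp (Finset.min'_mem _ hF'ne)).2
  · rintro x hx ⟨h1, h2⟩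
    exact absurd (Finset.min'_le _ _ (Finset.mem_filter.mpr ⟨hx, h1⟩)) (not_le.mpr h2)

lemma fiber_ne {u w : Fin b} {t z : Fin n} (ht : t ∈ fiber B u) (hz : z ∈ fiber B w)
    (hwu : w ≠ u) : z ≠ t := by
  intro h
  rw [h] at hz
  exact hwu (fiber_disj hz ht)

/-- Lemma II : if `u` passes `v` at time `t` and `w` is neither `u` nor passed at `t`,
then `v` is below `w` at time `t`. -/
lemma lemII (hfo : FOprop B) (hnc : NCprop B) {u v w : Fin b} {t : Fin n}
    (ht : t ∈ fiber B u) (hvu : v ≠ u) (htv : tau B hs u v = t)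
    (hwu : w ≠ u) (hwv : w ≠ v) (htw : tau B hs u w ≠ t) :
    dd B hs w v t.val = true := by
  rw [dd_iff]
  have htmn : mn B hs u ≤ t := mn_le ht
  have htmx : t ≤ mx B hs u := le_mx ht
  rcases lt_or_eq_of_le htmx with hcase | hcase
  · -- case (i) : t < mx u ; fiber v ⊆ (t, nt), fiber w ∩ (t, nt) = ∅
    obtain ⟨nt, hgap⟩ := next_gap ht hcase
    have htauFv : (tauF B hs u v).Nonempty := by
      by_contra hc
      rw [Finset.not_nonempty_iff_eq_empty] at hc
      have : tau B hs u v = mx B hs u := by unfold tau; rw [dif_neg (by rw [hc]; simp)]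
      rw [htv] at this
      exact absurd this (ne_of_lt hcase)
    have htmax : ∀ x ∈ fiber B u, x < mn B hs v → x ≤ t := by
      intro x hx hxlt
      rw [← htv]
      unfold tau
      rw [dif_pos htauFv]
      exact Finset.le_max' _ _ (mem_tauF.mpr ⟨hx, hxlt⟩)
    have htlt : t < mn B hs v := by
      have := Finset.max'_mem _ htauFv
      rw [mem_tauF] at this
      have h2 : (tauF B hs u v).max' htauFv = t := by
        rw [← htv]; unfold tau; rw [dif_pos htauFv]
      rw [← h2]; exact this.2
    have hmnnt : mn B hs v < nt := by
      rcases lt_trichotomy (mn B hs v) nt with h | h | h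
      · exact h
      · exact absurd (fiber_disj (h ▸ mn_mem v) hgap.2.1) hvu
      · exact absurd (htmax nt hgap.2.1 h) (not_le.mpr hgap.2.2.1)
    have hv_in : ∀ z ∈ fiber B v, t < z ∧ z < nt :=
      gapClosed hnc hgap hvu (mn_mem v) htlt hmnnt
    have hw_out : ∀ z ∈ fiber B w, ¬(t < z ∧ z < nt) := by
      rintro z hz ⟨h1, h2⟩
      have hall := gapClosed hnc hgap hwu hz h1 h2
      apply htw
      refine tau_eq_of ht (hall _ (mn_mem w)).1 ?_
      intro x hx hxlt
      by_contra hc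
      exact hgap.2.2.2 x hx ⟨lt_of_not_ge hc, lt_trans hxlt (hall _ (mn_mem w)).2⟩
    have hmnv_t : t < mn B hs v := htlt
    have hmxv_nt : mx B hs v < nt := (hv_in _ (mx_mem v)).2
    rcases hwv.symm.lt_or_gt with hvw | hvw
    · -- v < w
      have hmnvw : mn B hs v < mn B hs w := (lt_iff_mn_lt hfo (hs := hs)).mp hvw
      rcases tri hnc (hvw := hwv.symm) hmnvw with hbef | ⟨r, r', hg, hzw⟩
      · -- w entirely after v : mn w ≥ nt
        obtain ⟨h1, h2⟩ := tau_before (hs := hs) hbef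
        have hntw : nt ≤ mn B hs w := by
          rcases lt_or_ge (mn B hs w) nt with h | h
          · exact absurd ⟨lt_trans hmnv_t hmnvw, h⟩ (hw_out _ (mn_mem w))
          · exact h
        have hQ : ¬ (tau B hs w v).val < t.val := by
          rw [h2]
          have : t ≤ mx B hs w :=
            le_trans (le_of_lt (lt_of_lt_of_le hgap.2.2.1 hntw)) (mn_le_mx w)
          exact not_lt.mpr (Fin.le_def.mp this)
        have hR : ¬ (tau B hs v w).val < t.val := by
          rw [h1]
          exact not_lt.mpr (Fin.le_def.mp (le_of_lt (hv_in _ (mx_mem v)).1))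
        simp [hvw, hQ, hR]
      · -- w nested in gap (r,r') of v : impossible since fiber w avoids (t,nt)
        exfalso
        have hz := hzw (mn B hs w) (mn_mem (hs := hs) w)
        have h1 : t < mn B hs w := lt_trans (lt_of_lt_of_le hmnv_t (mn_le hg.1)) hz.1
        have h2 : mn B hs w < nt := lt_trans hz.2 (lt_of_le_of_lt (le_mx hg.2.1) hmxv_nt)
        exact hw_out _ (mn_mem w) ⟨h1, h2⟩
    · -- w < v
      have hmnwv : mn B hs w < mn B hs v := (lt_iff_mn_lt hfo (hs := hs)).mp hvw
      have hnvw : ¬ v < w := not_lt.mpr (le_of_lt hvw)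
      rcases tri hnc (hvw := hwv) hmnwv with hbef | ⟨r, r', hg, hzw⟩
      · -- w entirely before v : mx w < t
        obtain ⟨h1, h2⟩ := tau_before (hs := hs) hbef
        have hmxwt : mx B hs w < t := by
          have h3 : mx B hs w < nt := lt_of_lt_of_le hbef (le_of_lt hmnnt)
          have h4 : ¬(t < mx B hs w ∧ mx B hs w < nt) := hw_out _ (mx_mem w)
          have h5 : mx B hs w ≠ t := fiber_ne ht (mx_mem w) hwu
          rcases lt_trichotomy (mx B hs w) t with h | h | h
          · exact h
          · exact absurd h h5
          · exact absurd ⟨h, h3⟩ h4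
        have hQ : (tau B hs w v).val < t.val := by
          rw [h1]; exact Fin.lt_def.mp hmxwt
        have hR : ¬ (tau B hs v w).val < t.val := by
          rw [h2]
          exact not_lt.mpr (Fin.le_def.mp (le_of_lt (hv_in _ (mx_mem v)).1))
        simp [hnvw, hQ, hR]
      · -- v nested in gap (r,r') of w
        obtain ⟨h1, h2⟩ := tau_nest (hs := hs) hg hzw
        have hrt : r < t := by
          have h3 : r < mn B hs v := (hzw _ (mn_mem v)).1
          have h4 : r < nt := lt_trans h3 hmnnt
          have h5 : r ≠ t := fiber_ne ht hg.1 hwu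
          rcases lt_trichotomy r t with h | h | h
          · exact h
          · exact absurd h h5
          · exact absurd ⟨h, h4⟩ (hw_out r hg.1)
        have hQ : (tau B hs w v).val < t.val := by
          rw [h1]; exact Fin.lt_def.mp hrt
        have hR : ¬ (tau B hs v w).val < t.val := by
          rw [h2]
          exact not_lt.mpr (Fin.le_def.mp (le_of_lt (hv_in _ (mx_mem v)).1))
        simp [hnvw, hQ, hR]
  · -- case (ii) : t = mx u ; fiber w nested in an earlier gap of u
    have hFw : (tauF B hs u w).Nonempty := by
      by_contra hc
      rw [Finset.not_nonempty_iff_eq_empty] at hc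
      apply htw
      have : tau B hs u w = mx B hs u := by unfold tau; rw [dif_neg (by rw [hc]; simp)]
      rw [this, ← hcase]
    set sw := (tauF B hs u w).max' hFw with hswdef
    have htausw : tau B hs u w = sw := by unfold tau; rw [dif_pos hFw]
    have hswmem := Finset.max'_mem _ hFw
    rw [mem_tauF] at hswmem
    obtain ⟨hswfib, hswlt⟩ := hswmem
    have hswle : sw ≤ t := by rw [hcase]; exact le_mx hswfib
    have hswt : sw < t := by
      rcases lt_or_eq_of_le hswle with h | h
      · exact h
      · exact absurd (htausw.trans h) htw
    have hswmx : sw < mx B hs u := by rw [← hcase]; exact hswt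
    obtain ⟨ntw, hgapw⟩ := next_gap hswfib hswmx
    have hmnwnt : mn B hs w < ntw := by
      rcases lt_trichotomy (mn B hs w) ntw with h | h | h
      · exact h
      · exact absurd (fiber_disj (h ▸ mn_mem w) hgapw.2.1) hwu
      · exact absurd (Finset.le_max' _ _ (mem_tauF.mpr ⟨hgapw.2.1, h⟩))
          (not_le.mpr hgapw.2.2.1)
    have hw_in : ∀ z ∈ fiber B w, sw < z ∧ z < ntw :=
      gapClosed hnc hgapw hwu (mn_mem w) hswlt hmnwnt
    have hntwt : ntw ≤ t := by rw [hcase]; exact le_mx hgapw.2.1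
    have hmxwt : mx B hs w < t := lt_of_lt_of_le (hw_in _ (mx_mem w)).2 hntwt
    have hmnusw : mn B hs u ≤ sw := mn_le hswfib
    rcases hvu.lt_or_gt with hvltu | hultv
    · -- mn v < mn u : v before u or u nested in gap of v
      have hmnvu : mn B hs v < mn B hs u := (lt_iff_mn_lt hfo (hs := hs)).mp hvltu
      rcases tri hnc (hvw := hvu) hmnvu with hbef | ⟨r, r', hg, hzw⟩
      · -- v entirely before u, hence before w
        have hbvw : mx B hs v < mn B hs w :=
          lt_of_lt_of_le hbef (le_trans hmnusw (le_of_lt (lt_of_lt_of_le hswlt (le_refl _))))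
        obtain ⟨h1, h2⟩ := tau_before (hs := hs) hbvw
        have hvw : v < w := (lt_iff_mn_lt hfo (hs := hs)).mpr
          (lt_of_le_of_lt (mn_le_mx v) (lt_of_lt_of_le hbef (le_trans hmnusw (le_of_lt hswlt))))
        have hQ : (tau B hs w v).val < t.val := by
          rw [h2]; exact Fin.lt_def.mp hmxwt
        have hR : (tau B hs v w).val < t.val := by
          rw [h1]; exact Fin.lt_def.mp (lt_of_lt_of_le hbef htmn)
        simp [hvw, hQ, hR]
      · -- u nested in gap (r,r') of v ; w also inside (r,r')
        have hru : r < mn B hs u := (hzw _ (mn_mem u)).1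
        have hr'u : mx B hs u < r' := (hzw _ (mx_mem u)).2
        have hzw' : ∀ z ∈ fiber B w, r < z ∧ z < r' := by
          intro z hz
          constructor
          · exact lt_of_lt_of_le hru (le_trans hmnusw (le_of_lt (hw_in z hz).1))
          · have htr' : t < r' := by rw [hcase]; exact hr'u
            exact lt_of_lt_of_le (lt_of_lt_of_le (hw_in z hz).2 hntwt) htr'.le
        obtain ⟨h1, h2⟩ := tau_nest (hs := hs) hg hzw'
        have hvw : v < w := (lt_iff_mn_lt hfo (hs := hs)).mpr
          (lt_of_le_of_lt (mn_le hg.1)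
            (lt_of_lt_of_le hru (le_trans hmnusw (le_of_lt (lt_of_lt_of_le hswlt (le_refl _))))))
        have hQ : (tau B hs w v).val < t.val := by
          rw [h2]; exact Fin.lt_def.mp hmxwt
        have hR : (tau B hs v w).val < t.val := by
          rw [h1]
          exact Fin.lt_def.mp (lt_of_lt_of_le hru htmn)
        simp [hvw, hQ, hR]
    · -- mn u < mn v
      have hmnuv : mn B hs u < mn B hs v := (lt_iff_mn_lt hfo (hs := hs)).mp hultv
      rcases tri hnc (hvw := hvu.symm) hmnuv with hbef | ⟨s, s', hg, hzw⟩
      · -- v entirely after u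
        have hbwv : mx B hs w < mn B hs v := lt_of_lt_of_le (lt_of_lt_of_le hmxwt (hcase.le)) (le_of_lt hbef)
        obtain ⟨h1, h2⟩ := tau_before (hs := hs) hbwv
        have hwv' : w < v := (lt_iff_mn_lt hfo (hs := hs)).mpr
          (lt_of_le_of_lt (mn_le_mx w) hbwv)
        have hnvw : ¬ v < w := not_lt.mpr (le_of_lt hwv')
        have hQ : (tau B hs w v).val < t.val := by
          rw [h1]; exact Fin.lt_def.mp hmxwt
        have hR : ¬ (tau B hs v w).val < t.val := by
          rw [h2]
          have : t ≤ mx B hs v := le_trans (hcase.le.trans (le_of_lt hbef)) (mn_le_mx v)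
          exact not_lt.mpr (Fin.le_def.mp this)
        simp [hnvw, hQ, hR]
      · -- v nested in gap (s,s') of u : contradicts tau u v = t = mx u
        exfalso
        obtain ⟨h1, h2⟩ := tau_nest (hs := hs) hg hzw
        have : s < t := by
          have hss' : s < s' := hg.2.2.1
          have hs't : s' ≤ t := by rw [hcase]; exact le_mx hg.2.1
          exact lt_of_lt_of_le hss' hs't
        rw [htv] at h1
        exact absurd h1.symm (ne_of_lt this)

end Geometry3



variable {b n : ℕ}

section Psi

variable {B : Fin n → Fin b} {hs : ∀ u, (fiber B u).Nonempty}

/-- the number of balls that `B t` passes over at time `t` -/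
def mcount (B : Fin n → Fin b) (hs : ∀ u, (fiber B u).Nonempty) (t : Fin n) : ℕ :=
  (Finset.univ.filter (fun v => v ≠ B t ∧ tau B hs (B t) v = t)).card

lemma mcount_lt (t : Fin n) : mcount B hs t < b := by
  unfold mcount
  have h1 : (Finset.univ.filter (fun v => v ≠ B t ∧ tau B hs (B t) v = t)) ⊆
      Finset.univ.erase (B t) := by
    intro v hv
    rw [Finset.mem_filter] at hv
    exact Finset.mem_erase.mpr ⟨hv.2.1, Finset.mem_univ _⟩
  have h2 := Finset.card_le_card h1
  rw [Finset.card_erase_of_mem (Finset.mem_univ _), Finset.card_univ, Fintype.card_fin] at h2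
  have h3 : 0 < b := (B t).pos
  omega

/-- the card sequence associated to a bottom-ball sequence -/
def psi (B : Fin n → Fin b) (hs : ∀ u, (fiber B u).Nonempty) (t : Fin n) : Fin b :=
  ⟨mcount B hs t, mcount_lt t⟩

lemma count_lt_card (x : Fin b) :
    (Finset.univ.filter (fun v => v ≠ x ∧ v < x)).card = x.val := by
  have h : (Finset.univ.filter (fun v => v ≠ x ∧ v < x)) = Finset.Iio x := by
    ext v
    simp only [Finset.mem_filter, Finset.mem_univ, true_and, Finset.mem_Iio]
    exact ⟨fun h => h.2, fun h => ⟨ne_of_lt h, h⟩⟩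
  rw [h]
  exact Fin.card_Iio x

lemma dd_zero (x v : Fin b) : dd B hs x v 0 = decide (v < x) := by
  unfold dd
  simp

lemma pos_zero (x : Fin b) : pos B hs 0 x = x.val := by
  unfold pos
  rw [← count_lt_card x]
  congr 1
  ext v
  simp [dd_zero (hs := hs)]

lemma pos_top (x : Fin b) : pos B hs n x = x.val := by
  unfold pos
  rw [← count_lt_card x]
  congr 1
  ext v
  unfold dd
  have h1 : (tau B hs x v).val < n := (tau B hs x v).isLt
  have h2 : (tau B hs v x).val < n := (tau B hs v x).isLt
  simp [h1, h2]

lemma dd_succ_no {x y : Fin b} {t : ℕ} (h1 : (tau B hs x y).val ≠ t)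
    (h2 : (tau B hs y x).val ≠ t) : dd B hs x y (t + 1) = dd B hs x y t := by
  unfold dd
  have e1 : decide ((tau B hs x y).val < t + 1) = decide ((tau B hs x y).val < t) :=
    decide_eq_decide.mpr (by omega)
  have e2 : decide ((tau B hs y x).val < t + 1) = decide ((tau B hs y x).val < t) :=
    decide_eq_decide.mpr (by omega)
  rw [e1, e2]

lemma dd_succ_flip {x y : Fin b} {t : ℕ} (h1 : (tau B hs x y).val = t)
    (h2 : (tau B hs y x).val ≠ t) : dd B hs x y (t + 1) = !(dd B hs x y t) := by
  unfold dd
  have e1 : decide ((tau B hs x y).val < t + 1) = true :=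
    decide_eq_true_eq.mpr (by omega)
  have e1' : decide ((tau B hs x y).val < t) = false := by
    rw [decide_eq_false_iff_not]; omega
  have e2 : decide ((tau B hs y x).val < t + 1) = decide ((tau B hs y x).val < t) :=
    decide_eq_decide.mpr (by omega)
  rw [e1, e1', e2]
  cases decide (y < x) <;> cases decide ((tau B hs y x).val < t) <;> simp

lemma dd_swap {x y : Fin b} {t : ℕ} (hxy : x ≠ y) :
    dd B hs y x t = !(dd B hs x y t) := by
  unfold dd
  rcases hxy.lt_or_gt with h | h
  · have e1 : decide (x < y) = true := decide_eq_true_eq.mpr h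
    have e2 : decide (y < x) = false := by
      rw [decide_eq_false_iff_not]; exact not_lt.mpr (le_of_lt h)
    rw [e1, e2]
    cases decide ((tau B hs x y).val < t) <;> cases decide ((tau B hs y x).val < t) <;> simp
  · have e1 : decide (x < y) = false := by
      rw [decide_eq_false_iff_not]; exact not_lt.mpr (le_of_lt h)
    have e2 : decide (y < x) = true := decide_eq_true_eq.mpr h
    rw [e1, e2]
    cases decide ((tau B hs x y).val < t) <;> cases decide ((tau B hs y x).val < t) <;> simp

end Psi



variable {b n : ℕ}

section Invariant

variable {B : Fin n → Fin b} {hs : ∀ u, (fiber B u).Nonempty}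

lemma dd_succ_flip' {x y : Fin b} {t : ℕ} (h1 : (tau B hs x y).val ≠ t)
    (h2 : (tau B hs y x).val = t) : dd B hs x y (t + 1) = !(dd B hs x y t) := by
  unfold dd
  have e1 : decide ((tau B hs y x).val < t + 1) = true :=
    decide_eq_true_eq.mpr (by omega)
  have e1' : decide ((tau B hs y x).val < t) = false := by
    rw [decide_eq_false_iff_not]; omega
  have e2 : decide ((tau B hs x y).val < t + 1) = decide ((tau B hs x y).val < t) :=
    decide_eq_decide.mpr (by omega)
  rw [e1, e1', e2]
  cases decide (y < x) <;> cases decide ((tau B hs x y).val < t) <;> simp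

lemma tau_val_ne {v z : Fin b} {tF : Fin n} (hvu : v ≠ B tF) :
    (tau B hs v z).val ≠ tF.val := by
  intro h
  have h2 : tau B hs v z = tF := Fin.ext h
  have h3 : B tF = v := by rw [← h2]; exact B_tau v z
  exact hvu h3.symm

lemma pos_bot (hfo : FOprop B) (hnc : NCprop B) (t : Fin n) :
    pos B hs t.val (B t) = 0 := by
  unfold pos
  rw [Finset.card_eq_zero]
  ext v
  simp only [Finset.mem_filter, Finset.mem_univ, true_and, Finset.notMem_empty, iff_false,
    not_and]
  intro hv
  rw [lemI hfo hnc (mem_fiber.mpr rfl) hv]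
  simp

theorem invariant (hfo : FOprop B) (hnc : NCprop B) :
    ∀ t : ℕ, t ≤ n → ∀ x : Fin b, (stA (psi B hs) t x).val = pos B hs t x := by
  intro t
  induction t with
  | zero => intro _ x; rw [stA_zero, pos_zero]
  | succ t IH =>
    intro htn x
    have ht : t < n := htn
    have IH' := IH (le_of_lt ht)
    set tF : Fin n := ⟨t, ht⟩ with htF_def
    have htF : tF ∈ fiber B (B tF) := mem_fiber.mpr rfl
    set Pt : Finset (Fin b) :=
      Finset.univ.filter (fun v => v ≠ B tF ∧ tau B hs (B tF) v = tF) with hPt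
    have hpsival : (psi B hs tF).val = Pt.card := by rw [hPt]; rfl
    have mem_Pt : ∀ v, v ∈ Pt ↔ v ≠ B tF ∧ tau B hs (B tF) v = tF := by
      intro v; rw [hPt]; simp
    have fact0 : ∀ v, v ≠ B tF → dd B hs (B tF) v t = false := by
      intro v hv; exact lemI hfo hnc htF hv
    have pos_u : pos B hs t (B tF) = 0 := pos_bot hfo hnc tF
    have dd_vu : ∀ v, v ≠ B tF → dd B hs v (B tF) t = true := by
      intro v hv
      rw [dd_swap (Ne.symm hv), fact0 v hv]
      rfl
    have tau_ne1 : ∀ v z : Fin b, v ≠ B tF → (tau B hs v z).val ≠ t := by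
      intro v z hv; exact tau_val_ne hv
    have tau_yv_ne : ∀ y v : Fin b, y ≠ B tF → (tau B hs y v).val ≠ t := tau_ne1
    -- update rule for the bottom ball
    have pos_succ_u : pos B hs (t + 1) (B tF) = Pt.card := by
      rw [hPt]
      unfold pos
      congr 1
      ext v
      simp only [Finset.mem_filter, Finset.mem_univ, true_and]
      refine and_congr_right (fun hv => ?_)
      by_cases hτ : tau B hs (B tF) v = tF
      · rw [dd_succ_flip (by rw [hτ]) (tau_ne1 v (B tF) hv), fact0 v hv]
        simp [hτ]
      · have hτv : (tau B hs (B tF) v).val ≠ t := fun h => hτ (Fin.ext h)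
        rw [dd_succ_no hτv (tau_ne1 v (B tF) hv), fact0 v hv]
        simp [hτ]
    -- update rule for passed balls
    have pos_succ_v : ∀ v ∈ Pt, pos B hs (t + 1) v + 1 = pos B hs t v := by
      intro v hv
      obtain ⟨hvne, hvtau⟩ := (mem_Pt v).mp hv
      have hddvu1 : dd B hs v (B tF) (t + 1) = false := by
        rw [dd_succ_flip' (tau_ne1 v (B tF) hvne) (by rw [hvtau]), dd_vu v hvne]
        rfl
      have hset : Finset.univ.filter (fun y => y ≠ v ∧ dd B hs v y t = true)
          = insert (B tF) (Finset.univ.filter (fun y => y ≠ v ∧ dd B hs v y (t + 1) = true)) := by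
        ext y
        simp only [Finset.mem_filter, Finset.mem_univ, true_and, Finset.mem_insert]
        constructor
        · rintro ⟨hyv, hydd⟩
          by_cases hyu : y = B tF
          · exact Or.inl hyu
          · refine Or.inr ⟨hyv, ?_⟩
            have hne2 : (tau B hs y v).val ≠ t := tau_yv_ne y v hyu
            rw [dd_succ_no (tau_ne1 v y hvne) hne2]
            exact hydd
        · rintro (hyu | ⟨hyv, hydd⟩)
          · subst hyu
            exact ⟨Ne.symm hvne, dd_vu v hvne⟩
          · refine ⟨hyv, ?_⟩
            by_cases hyu : y = B tF
            · subst hyu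
              rw [hddvu1] at hydd
              exact absurd hydd (by simp)
            · have hne2 : (tau B hs y v).val ≠ t := tau_yv_ne y v hyu
              rw [← dd_succ_no (tau_ne1 v y hvne) hne2]
              exact hydd
      have hnotmem : B tF ∉ Finset.univ.filter (fun y => y ≠ v ∧ dd B hs v y (t + 1) = true) := by
        simp only [Finset.mem_filter, Finset.mem_univ, true_and, not_and]
        intro _
        rw [hddvu1]
        simp
      unfold pos
      rw [hset, Finset.card_insert_of_notMem hnotmem]
    -- update rule for other balls
    have pos_succ_w : ∀ w, w ≠ B tF → w ∉ Pt → pos B hs (t + 1) w = pos B hs t w := by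
      intro w hwne hwPt
      unfold pos
      congr 1
      ext y
      simp only [Finset.mem_filter, Finset.mem_univ, true_and]
      refine and_congr_right (fun hy => ?_)
      have h1 : (tau B hs w y).val ≠ t := tau_ne1 w y hwne
      have h2 : (tau B hs y w).val ≠ t := by
        intro hcon
        have h3 : tau B hs y w = tF := Fin.ext hcon
        have h4 : B tF = y := by rw [← h3]; exact B_tau y w
        rw [← h4] at h3
        apply hwPt
        rw [mem_Pt]
        exact ⟨hwne, h3⟩
      rw [dd_succ_no h1 h2]
    -- bounds
    have bound_v : ∀ v ∈ Pt, 1 ≤ pos B hs t v ∧ pos B hs t v ≤ Pt.card := by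
      intro v hv
      obtain ⟨hvne, hvtau⟩ := (mem_Pt v).mp hv
      constructor
      · rw [Nat.one_le_iff_ne_zero]
        intro hzero
        have : v ∈ Finset.univ.filter (fun y => y ≠ v ∧ dd B hs v y t = true) → False := by
          intro hcon
          exact absurd ((Finset.mem_filter.mp hcon).2.1) (by simp)
        have hmem : B tF ∈ Finset.univ.filter (fun y => y ≠ v ∧ dd B hs v y t = true) :=
          Finset.mem_filter.mpr ⟨Finset.mem_univ _, Ne.symm hvne, dd_vu v hvne⟩
        have := Finset.card_pos.mpr ⟨_, hmem⟩
        unfold pos at hzero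
        omega
      · have hsub : Finset.univ.filter (fun y => y ≠ v ∧ dd B hs v y t = true)
            ⊆ insert (B tF) (Pt.erase v) := by
          intro y hy
          rw [Finset.mem_filter] at hy
          obtain ⟨-, hyv, hydd⟩ := hy
          by_cases hyu : y = B tF
          · exact Finset.mem_insert.mpr (Or.inl hyu)
          · refine Finset.mem_insert.mpr (Or.inr (Finset.mem_erase.mpr ⟨hyv, ?_⟩))
            rw [mem_Pt]
            refine ⟨hyu, ?_⟩
            by_contra hcon
            have hII := lemII hfo hnc htF hvne hvtau hyu hyv hcon
            rw [dd_swap hyv] at hydd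
            rw [hII] at hydd
            exact absurd hydd (by simp)
        have h1 := Finset.card_le_card hsub
        have h2 := Finset.card_insert_le (B tF) (Pt.erase v)
        have h3 : (Pt.erase v).card = Pt.card - 1 := Finset.card_erase_of_mem hv
        have h4 : 1 ≤ Pt.card := Finset.card_pos.mpr ⟨v, hv⟩
        unfold pos
        omega
    have bound_w : ∀ w, w ≠ B tF → w ∉ Pt → Pt.card + 1 ≤ pos B hs t w := by
      intro w hwne hwPt
      have hsub : insert (B tF) Pt ⊆
          Finset.univ.filter (fun y => y ≠ w ∧ dd B hs w y t = true) := by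
        intro y hy
        rcases Finset.mem_insert.mp hy with hyu | hyPt
        · subst hyu
          exact Finset.mem_filter.mpr ⟨Finset.mem_univ _, Ne.symm hwne, dd_vu w hwne⟩
        · obtain ⟨hyne, hytau⟩ := (mem_Pt y).mp hyPt
          have hyw : y ≠ w := fun h => hwPt (h ▸ hyPt)
          have htw : tau B hs (B tF) w ≠ tF := by
            intro hcon
            exact hwPt ((mem_Pt w).mpr ⟨hwne, hcon⟩)
          have hII := lemII hfo hnc htF hyne hytau hwne (Ne.symm hyw) htw
          exact Finset.mem_filter.mpr ⟨Finset.mem_univ _, hyw, hII⟩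
      have h1 := Finset.card_le_card hsub
      have h2 : (insert (B tF) Pt).card = Pt.card + 1 := by
        rw [Finset.card_insert_of_notMem]
        intro hcon
        exact absurd ((mem_Pt _).mp hcon).1 (by simp)
      unfold pos
      omega
    -- assemble
    rw [stA_succ _ ht x, ← htF_def, cardFun_val, IH' x, hpsival]
    by_cases hx : x = B tF
    · subst hx  -- note : x = B tF substitutes
      rw [pos_u, pos_succ_u]
      simp
    · by_cases hx2 : x ∈ Pt
      · obtain ⟨h1, h2⟩ := bound_v x hx2
        have h3 := pos_succ_v x hx2
        rw [if_neg (by omega), if_pos h2]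
        omega
      · have h4 := bound_w x hx hx2
        have h5 := pos_succ_w x hx hx2
        rw [if_neg (by omega), if_neg (by omega)]
        omega

end Invariant



variable {b n : ℕ}

section PsiMin

variable {B : Fin n → Fin b} {hs : ∀ u, (fiber B u).Nonempty}

theorem psi_identity (hfo : FOprop B) (hnc : NCprop B) :
    compSeq (fun j => cardFun (psi B hs j)) = id := by
  rw [stA_top]
  funext x
  apply Fin.ext
  rw [invariant hfo hnc n le_rfl x, pos_top]
  rfl

theorem psi_bottom (hfo : FOprop B) (hnc : NCprop B) (t : Fin n) :
    stA (psi B hs) t.val (B t) = ⟨0, (B t).pos⟩ := by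
  apply Fin.ext
  rw [invariant hfo hnc t.val (le_of_lt t.isLt) (B t), pos_bot hfo hnc t]

theorem psi_sum : (∑ j, (psi B hs j).val) = b * (b - 1) := by
  have step1 : ∀ t : Fin n, (psi B hs t).val =
      (Finset.univ.offDiag.filter (fun p : Fin b × Fin b => tau B hs p.1 p.2 = t)).card := by
    intro t
    show mcount B hs t = _
    unfold mcount
    apply Finset.card_bij' (fun v _ => ((B t, v) : Fin b × Fin b)) (fun p _ => p.2)
    · intro v hv
      rw [Finset.mem_filter] at hv
      rw [Finset.mem_filter, Finset.mem_offDiag]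
      exact ⟨⟨Finset.mem_univ _, Finset.mem_univ _, Ne.symm hv.2.1⟩, hv.2.2⟩
    · intro p hp
      rw [Finset.mem_filter, Finset.mem_offDiag] at hp
      obtain ⟨⟨-, -, hne⟩, htau⟩ := hp
      have hp1 : B t = p.1 := by rw [← htau]; exact B_tau p.1 p.2
      rw [Finset.mem_filter]
      refine ⟨Finset.mem_univ _, fun h => hne ?_, by rw [hp1]; exact htau⟩
      rw [h, ← hp1]
    · intro v hv; rfl
    · intro p hp
      rw [Finset.mem_filter, Finset.mem_offDiag] at hp
      obtain ⟨⟨-, -, hne⟩, htau⟩ := hp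
      have hp1 : B t = p.1 := by rw [← htau]; exact B_tau p.1 p.2
      rw [hp1]
  have step2 : (Finset.univ.offDiag : Finset (Fin b × Fin b)).card =
      ∑ t : Fin n, (Finset.univ.offDiag.filter
        (fun p : Fin b × Fin b => tau B hs p.1 p.2 = t)).card := by
    apply Finset.card_eq_sum_card_fiberwise
    intro p _
    exact Finset.mem_univ _
  have step3 : (Finset.univ.offDiag : Finset (Fin b × Fin b)).card = b * (b - 1) := by
    rw [Finset.offDiag_card, Finset.card_univ, Fintype.card_fin]
    cases b with
    | zero => rfl
    | succ k =>
      have h2 : (k + 1) * (k + 1) = (k + 1) * k + (k + 1) := Nat.mul_succ (k + 1) k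
      have h3 : k + 1 - 1 = k := rfl
      rw [h3]
      omega
  calc (∑ j, (psi B hs j).val)
      = ∑ t : Fin n, (Finset.univ.offDiag.filter
          (fun p : Fin b × Fin b => tau B hs p.1 p.2 = t)).card := by
        apply Finset.sum_congr rfl; intro t _; exact step1 t
    _ = b * (b - 1) := by rw [← step2, step3]

theorem psi_witness (hnc : NCprop B) (hn : 1 ≤ n) :
    ∃ j, (psi B hs j).val = b - 1 := by
  -- choose a block with minimal span
  have hne : (Finset.univ : Finset (Fin b)).Nonempty := ⟨B ⟨0, hn⟩, Finset.mem_univ _⟩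
  obtain ⟨u, -, hmin⟩ := Finset.exists_min_image Finset.univ
    (fun u => (mx B hs u).val - (mn B hs u).val) hne
  refine ⟨mx B hs u, ?_⟩
  have hBt : B (mx B hs u) = u := B_mx u
  show mcount B hs (mx B hs u) = b - 1
  unfold mcount
  have hall : ∀ v, v ≠ B (mx B hs u) → tau B hs (B (mx B hs u)) v = mx B hs u := by
    rw [hBt]
    intro v hv
    by_cases hF : (tauF B hs u v).Nonempty
    · have htau : tau B hs u v = (tauF B hs u v).max' hF := by
        unfold tau; rw [dif_pos hF]
      have hsmem := Finset.max'_mem _ hF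
      rw [mem_tauF] at hsmem
      obtain ⟨hsfib, hslt⟩ := hsmem
      rcases lt_or_eq_of_le (le_mx (hs := hs) hsfib) with hlt | heq
      · exfalso
        obtain ⟨nt, hgap⟩ := next_gap hsfib hlt
        have hmnnt : mn B hs v < nt := by
          rcases lt_trichotomy (mn B hs v) nt with h | h | h
          · exact h
          · exact absurd (fiber_disj (h ▸ mn_mem v) hgap.2.1) hv
          · exact absurd (Finset.le_max' _ _ (mem_tauF.mpr ⟨hgap.2.1, h⟩))
              (not_le.mpr hgap.2.2.1)
        have hv_in := gapClosed hnc hgap hv (mn_mem v) hslt hmnnt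
        have h1 : ((tauF B hs u v).max' hF).val < (mn B hs v).val := hslt
        have h2 : (mx B hs v).val < nt.val := (hv_in _ (mx_mem v)).2
        have h3 : (mn B hs u).val ≤ ((tauF B hs u v).max' hF).val :=
          Fin.le_def.mp (mn_le hsfib)
        have h4 : nt.val ≤ (mx B hs u).val := Fin.le_def.mp (le_mx hgap.2.1)
        have h5 := hmin v (Finset.mem_univ v)
        omega
      · rw [htau, heq]
    · unfold tau; rw [dif_neg hF]
  have hset : Finset.univ.filter
      (fun v => v ≠ B (mx B hs u) ∧ tau B hs (B (mx B hs u)) v = mx B hs u)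
      = Finset.univ.erase (B (mx B hs u)) := by
    ext v
    rw [Finset.mem_filter, Finset.mem_erase]
    constructor
    · rintro ⟨h1, h2, -⟩; exact ⟨h2, h1⟩
    · rintro ⟨h1, h2⟩; exact ⟨h2, h1, hall v h1⟩
  rw [hset, Finset.card_erase_of_mem (Finset.mem_univ _), Finset.card_univ, Fintype.card_fin]

theorem psi_isMinCross (hB : IsNCB B) (hn : 1 ≤ n) :
    _root_.IsMinCross (psi B hs) := by
  obtain ⟨hfo, hsurj, hnc⟩ := hB
  exact ⟨psi_witness hnc hn, psi_identity hfo hnc, psi_sum⟩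

end PsiMin



variable {b n : ℕ}

section Converse

variable (A : Fin n → Fin b)

/-- ball `x` passes over ball `y` at time `t` -/
def PassAt (t : Fin n) (x y : Fin b) : Prop :=
  (stA A t.val x).val = 0 ∧ 1 ≤ (stA A t.val y).val ∧ (stA A t.val y).val ≤ (A t).val

instance (t : Fin n) (x y : Fin b) : Decidable (PassAt A t x y) := by
  unfold PassAt; infer_instance

/-- number of passes of `x` over `y` strictly before time `t` -/
def P (x y : Fin b) (t : ℕ) : ℕ :=
  (Finset.univ.filter (fun s : Fin n => s.val < t ∧ PassAt A s x y)).card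

lemma P_zero (x y : Fin b) : P A x y 0 = 0 := by
  unfold P
  rw [Finset.card_eq_zero]
  ext s
  simp

lemma P_succ {t : ℕ} (h : t < n) (x y : Fin b) :
    P A x y (t + 1) = P A x y t + (if PassAt A ⟨t, h⟩ x y then 1 else 0) := by
  unfold P
  by_cases hp : PassAt A ⟨t, h⟩ x y
  · rw [if_pos hp]
    have hset : Finset.univ.filter (fun s : Fin n => s.val < t + 1 ∧ PassAt A s x y)
        = insert ⟨t, h⟩ (Finset.univ.filter (fun s : Fin n => s.val < t ∧ PassAt A s x y)) := by
      ext s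
      simp only [Finset.mem_filter, Finset.mem_univ, true_and, Finset.mem_insert]
      constructor
      · rintro ⟨h1, h2⟩
        by_cases hst : s.val = t
        · exact Or.inl (Fin.ext hst)
        · exact Or.inr ⟨by omega, h2⟩
      · rintro (rfl | ⟨h1, h2⟩)
        · exact ⟨Nat.lt_succ_self t, hp⟩
        · exact ⟨by omega, h2⟩
    rw [hset, Finset.card_insert_of_notMem (by simp)]
  · rw [if_neg hp]
    have hset : Finset.univ.filter (fun s : Fin n => s.val < t + 1 ∧ PassAt A s x y)
        = Finset.univ.filter (fun s : Fin n => s.val < t ∧ PassAt A s x y) := by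
      ext s
      simp only [Finset.mem_filter, Finset.mem_univ, true_and]
      constructor
      · rintro ⟨h1, h2⟩
        refine ⟨?_, h2⟩
        by_cases hst : s.val = t
        · exact absurd h2 (by rw [show s = ⟨t, h⟩ from Fin.ext hst]; exact hp)
        · omega
      · rintro ⟨h1, h2⟩
        exact ⟨by omega, h2⟩
    rw [hset]
    omega

lemma P_mono (x y : Fin b) {s t : ℕ} (hst : s ≤ t) : P A x y s ≤ P A x y t := by
  apply Finset.card_le_card
  intro r hr
  rw [Finset.mem_filter] at hr ⊢
  exact ⟨hr.1, by omega, hr.2.2⟩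

lemma belowInv {x y : Fin b} (hxy : x < y) :
    ∀ t, t ≤ n →
      (P A y x t ≤ P A x y t ∧ P A x y t ≤ P A y x t + 1) ∧
      (((stA A t x).val < (stA A t y).val) ↔ P A x y t = P A y x t) := by
  intro t
  induction t with
  | zero =>
    intro _
    rw [P_zero, P_zero, stA_zero, stA_zero]
    simp [Fin.lt_def.mp hxy]
  | succ t IH =>
    intro htn
    have h : t < n := htn
    obtain ⟨⟨ihb1, ihb2⟩, ihiff⟩ := IH (le_of_lt h)
    have hne : x ≠ y := ne_of_lt hxy
    have hpxy : (stA A t x).val ≠ (stA A t y).val := by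
      intro hcon
      exact hne (stA_injective A t (Fin.ext hcon))
    rw [P_succ A h, P_succ A h, stA_succ A h x, stA_succ A h y, cardFun_val, cardFun_val]
    by_cases hp1 : PassAt A ⟨t, h⟩ x y <;> by_cases hp2 : PassAt A ⟨t, h⟩ y x
    · exfalso
      obtain ⟨e1, e2, -⟩ := hp1
      obtain ⟨f1, f2, -⟩ := hp2
      simp only [show ((⟨t, h⟩ : Fin n) : ℕ) = t from rfl] at e1 f2
      omega
    · rw [if_pos hp1, if_neg hp2]
      obtain ⟨e1, e2, e3⟩ := hp1
      simp only [show ((⟨t, h⟩ : Fin n) : ℕ) = t from rfl] at e1 e2 e3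
      have hi : ((A ⟨t, h⟩).val : ℕ) < b := (A ⟨t, h⟩).isLt
      constructor
      · omega
      · split_ifs <;> omega
    · rw [if_neg hp1, if_pos hp2]
      obtain ⟨e1, e2, e3⟩ := hp2
      simp only [show ((⟨t, h⟩ : Fin n) : ℕ) = t from rfl] at e1 e2 e3
      constructor
      · omega
      · split_ifs <;> omega
    · rw [if_neg hp1, if_neg hp2]
      simp only [PassAt, not_and, not_le,
        show ((⟨t, h⟩ : Fin n) : ℕ) = t from rfl] at hp1 hp2
      constructor
      · omega
      · split_ifs <;> omega

end Converse



variable {b n : ℕ}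

lemma offDiag_card_fin : (Finset.univ.offDiag : Finset (Fin b × Fin b)).card = b * (b - 1) := by
  rw [Finset.offDiag_card, Finset.card_univ, Fintype.card_fin]
  cases b with
  | zero => rfl
  | succ k =>
    have h2 : (k + 1) * (k + 1) = (k + 1) * k + (k + 1) := Nat.mul_succ (k + 1) k
    have h3 : k + 1 - 1 = k := rfl
    rw [h3]
    omega

lemma card_filter_perm (e : Equiv.Perm (Fin b)) (p : Fin b → Prop) [DecidablePred p] :
    (Finset.univ.filter (fun x => p (e x))).card = (Finset.univ.filter p).card := by
  apply Finset.card_bij (fun x _ => e x)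
  · intro a ha
    rw [Finset.mem_filter] at ha ⊢
    exact ⟨Finset.mem_univ _, ha.2⟩
  · intro a _ a' _ h
    exact e.injective h
  · intro c hc
    rw [Finset.mem_filter] at hc
    exact ⟨e.symm c, Finset.mem_filter.mpr ⟨Finset.mem_univ _, by simpa using hc.2⟩, by simp⟩

lemma fin_interval_card {i : ℕ} (hi : i < b) :
    (Finset.univ.filter (fun q : Fin b => 1 ≤ q.val ∧ q.val ≤ i)).card = i := by
  have hb : 0 < b := by omega
  have h : (Finset.univ.filter (fun q : Fin b => 1 ≤ q.val ∧ q.val ≤ i))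
      = Finset.Ioc (⟨0, hb⟩ : Fin b) ⟨i, hi⟩ := by
    ext q
    simp only [Finset.mem_filter, Finset.mem_univ, true_and, Finset.mem_Ioc]
    rw [Fin.lt_def, Fin.le_def]
    simp only []
    omega
  rw [h, Fin.card_Ioc]
  simp

section Converse2

variable (A : Fin n → Fin b)

noncomputable def stpA (t : ℕ) : Equiv.Perm (Fin b) :=
  Equiv.ofBijective _ (stA_bijective A t)

lemma stpA_apply (t : ℕ) (x : Fin b) : stpA A t x = stA A t x := rfl

/-- bottom ball at time `t` -/
noncomputable def BA (t : Fin n) : Fin b := (stpA A t.val).symm ⟨0, (A t).pos⟩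

lemma BA_spec (t : Fin n) : (stA A t.val (BA A t)).val = 0 := by
  have h : stpA A t.val (BA A t) = ⟨0, (A t).pos⟩ := Equiv.apply_symm_apply _ _
  rw [← stpA_apply, h]

lemma eq_BA_of {t : Fin n} {x : Fin b} (h : (stA A t.val x).val = 0) : x = BA A t := by
  have h1 : stA A t.val x = ⟨0, (A t).pos⟩ := Fin.ext h
  have h3 : stA A t.val (BA A t) = ⟨0, (A t).pos⟩ := Fin.ext (BA_spec A t)
  exact stA_injective A t.val (h1.trans h3.symm)

lemma interval_card (t : ℕ) {i : ℕ} (hi : i < b) :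
    (Finset.univ.filter (fun p : Fin b =>
      1 ≤ (stA A t p).val ∧ (stA A t p).val ≤ i)).card = i := by
  have h := card_filter_perm (stpA A t) (fun q : Fin b => 1 ≤ q.val ∧ q.val ≤ i)
  rw [fin_interval_card hi] at h
  exact h

lemma passPairs_card (t : Fin n) :
    (Finset.univ.offDiag.filter
      (fun p : Fin b × Fin b => PassAt A t p.1 p.2)).card = (A t).val := by
  have hset : Finset.univ.offDiag.filter (fun p : Fin b × Fin b => PassAt A t p.1 p.2)
      = (Finset.univ.filter (fun y : Fin b =>
          1 ≤ (stA A t.val y).val ∧ (stA A t.val y).val ≤ (A t).val)).image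
        (fun y => (BA A t, y)) := by
    ext p
    rw [Finset.mem_filter, Finset.mem_image, Finset.mem_offDiag]
    constructor
    · rintro ⟨⟨-, -, hne⟩, h0, h1, h2⟩
      refine ⟨p.2, Finset.mem_filter.mpr ⟨Finset.mem_univ _, h1, h2⟩, ?_⟩
      have hp1 : p.1 = BA A t := eq_BA_of A h0
      rw [← hp1]
    · rintro ⟨y, hy, rfl⟩
      obtain ⟨-, h1, h2⟩ := Finset.mem_filter.mp hy
      have hne : BA A t ≠ y := by
        intro hcon
        have := BA_spec A t
        rw [hcon] at this
        omega
      exact ⟨⟨Finset.mem_univ _, Finset.mem_univ _, hne⟩, BA_spec A t, h1, h2⟩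
  rw [hset, Finset.card_image_of_injective _ (fun y z h => (Prod.ext_iff.mp h).2),
    interval_card A t.val (A t).isLt]

lemma P_top (x y : Fin b) :
    P A x y n = (Finset.univ.filter (fun s : Fin n => PassAt A s x y)).card := by
  unfold P
  congr 1
  ext s
  simp only [Finset.mem_filter, Finset.mem_univ, true_and]
  exact ⟨fun h => h.2, fun h => ⟨s.isLt, h⟩⟩

lemma sum_P (hmc : IsMinCross A) :
    (∑ p ∈ Finset.univ.offDiag, P A p.1 p.2 n) = b * (b - 1) := by
  have step : ∀ t : Fin n, (A t).val
      = ∑ p ∈ Finset.univ.offDiag, ite (PassAt A t p.1 p.2) 1 0 := by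
    intro t
    rw [← Finset.sum_filter, Finset.sum_const, smul_eq_mul, mul_one]
    exact (passPairs_card A t).symm
  calc (∑ p ∈ Finset.univ.offDiag, P A p.1 p.2 n)
      = ∑ p ∈ Finset.univ.offDiag, ∑ t : Fin n, ite (PassAt A t p.1 p.2) 1 0 := by
        apply Finset.sum_congr rfl
        intro p _
        rw [P_top, ← Finset.sum_filter, Finset.sum_const, smul_eq_mul, mul_one]
    _ = ∑ t : Fin n, ∑ p ∈ Finset.univ.offDiag, ite (PassAt A t p.1 p.2) 1 0 :=
        Finset.sum_comm
    _ = ∑ t : Fin n, (A t).val := by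
        apply Finset.sum_congr rfl
        intro t _
        exact (step t).symm
    _ = b * (b - 1) := hmc.2.2

lemma stA_id (hmc : IsMinCross A) (x : Fin b) : stA A n x = x := by
  have h := hmc.2.1
  rw [stA_top] at h
  exact congrFun h x

lemma c_eq (hmc : IsMinCross A) {x y : Fin b} (hxy : x < y) : P A x y n = P A y x n := by
  have hinv := (belowInv A hxy n le_rfl).2
  rw [stA_id A hmc x, stA_id A hmc y] at hinv
  exact hinv.mp (Fin.lt_def.mp hxy)

lemma bottoms (hmc : IsMinCross A) (y : Fin b) : ∃ t : Fin n, (stA A t.val y).val = 0 := by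
  obtain ⟨T, hT⟩ := hmc.1
  by_cases hy : y = BA A T
  · exact ⟨T, by rw [hy]; exact BA_spec A T⟩
  · have hpass : PassAt A T (BA A T) y := by
      refine ⟨BA_spec A T, ?_, ?_⟩
      · have : (stA A T.val y).val ≠ 0 := fun h => hy (eq_BA_of A h)
        omega
      · have := (stA A T.val y).isLt
        omega
    have hx0y : 1 ≤ P A (BA A T) y n := by
      rw [Nat.one_le_iff_ne_zero]
      intro hcon
      unfold P at hcon
      rw [Finset.card_eq_zero] at hcon
      have hTm : T ∈ Finset.univ.filter
          (fun s : Fin n => s.val < n ∧ PassAt A s (BA A T) y) :=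
        Finset.mem_filter.mpr ⟨Finset.mem_univ _, T.isLt, hpass⟩
      rw [hcon] at hTm
      exact absurd hTm (Finset.notMem_empty T)
    have hyx0 : 1 ≤ P A y (BA A T) n := by
      rcases (Ne.symm hy).lt_or_gt with h | h
      · rw [c_eq A hmc h] at hx0y; exact hx0y
      · rw [c_eq A hmc h]; exact hx0y
    have hyx0p : 0 < (Finset.univ.filter
        (fun s : Fin n => s.val < n ∧ PassAt A s y (BA A T))).card := by
      unfold P at hyx0; omega
    obtain ⟨s, hsmem⟩ := Finset.card_pos.mp hyx0p
    rw [Finset.mem_filter] at hsmem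
    exact ⟨s, hsmem.2.2.1⟩

lemma pair_ge_one (hmc : IsMinCross A) {x y : Fin b} (hxy : x ≠ y) : 1 ≤ P A x y n := by
  have key : ∀ u v : Fin b, u < v → 1 ≤ P A u v n := by
    intro u v huv
    obtain ⟨t, htv⟩ := bottoms A hmc v
    have hinv := belowInv A huv t.val (le_of_lt t.isLt)
    have hne : (stA A t.val u).val ≠ 0 := by
      intro h
      have h1 : u = BA A t := eq_BA_of A h
      have h2 : v = BA A t := eq_BA_of A htv
      exact absurd (h1.trans h2.symm) (ne_of_lt huv)
    have hbelow : ¬ ((stA A t.val u).val < (stA A t.val v).val) := by omega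
    have h3 : 1 ≤ P A u v t.val := by
      have hiff := hinv.2
      have hb1 := hinv.1.1
      have hb2 := hinv.1.2
      omega
    have h4 := P_mono A u v (le_of_lt t.isLt)
    omega
  rcases hxy.lt_or_gt with h | h
  · exact key x y h
  · rw [← c_eq A hmc h]
    exact key y x h

lemma pair_eq_one (hmc : IsMinCross A) {x y : Fin b} (hxy : x ≠ y) : P A x y n = 1 := by
  by_contra hcon
  have hge : ∀ p ∈ (Finset.univ.offDiag : Finset (Fin b × Fin b)), 1 ≤ P A p.1 p.2 n := by
    intro p hp
    exact pair_ge_one A hmc (Finset.mem_offDiag.mp hp).2.2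
  have hmem : (x, y) ∈ (Finset.univ.offDiag : Finset (Fin b × Fin b)) :=
    Finset.mem_offDiag.mpr ⟨Finset.mem_univ _, Finset.mem_univ _, hxy⟩
  have hlt : (1 : ℕ) < P A x y n := by
    have := pair_ge_one A hmc hxy
    omega
  have hsum : (Finset.univ.offDiag : Finset (Fin b × Fin b)).card <
      ∑ p ∈ Finset.univ.offDiag, P A p.1 p.2 n := by
    calc (Finset.univ.offDiag : Finset (Fin b × Fin b)).card
        = ∑ _p ∈ Finset.univ.offDiag, 1 := by
          rw [Finset.sum_const, smul_eq_mul, mul_one]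
      _ < ∑ p ∈ Finset.univ.offDiag, P A p.1 p.2 n :=
          Finset.sum_lt_sum hge ⟨(x, y), hmem, hlt⟩
  rw [sum_P A hmc, offDiag_card_fin] at hsum
  exact absurd hsum (lt_irrefl _)

lemma exists_unique_pass (hmc : IsMinCross A) {x y : Fin b} (hxy : x ≠ y) :
    ∃! s : Fin n, PassAt A s x y := by
  have h1 := pair_eq_one A hmc hxy
  rw [P_top] at h1
  obtain ⟨a, ha⟩ := Finset.card_eq_one.mp h1
  refine ⟨a, ?_, ?_⟩
  · have : a ∈ Finset.univ.filter (fun s : Fin n => PassAt A s x y) := by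
      rw [ha]; exact Finset.mem_singleton_self a
    exact (Finset.mem_filter.mp this).2
  · intro s hsp
    have : s ∈ Finset.univ.filter (fun s : Fin n => PassAt A s x y) :=
      Finset.mem_filter.mpr ⟨Finset.mem_univ _, hsp⟩
    rw [ha, Finset.mem_singleton] at this
    exact this

end Converse2



variable {b n : ℕ}

section Converse3

variable {A : Fin n → Fin b}

lemma hsA (hmc : IsMinCross A) : ∀ u, (fiber (BA A) u).Nonempty := by
  intro u
  obtain ⟨t, ht⟩ := bottoms A hmc u
  exact ⟨t, mem_fiber.mpr (eq_BA_of A ht).symm⟩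

/-- the unique time at which `x` passes over `y` -/
noncomputable def eT (hmc : IsMinCross A) {x y : Fin b} (hxy : x ≠ y) : Fin n :=
  (exists_unique_pass A hmc hxy).exists.choose

lemma eT_spec (hmc : IsMinCross A) {x y : Fin b} (hxy : x ≠ y) :
    PassAt A (eT hmc hxy) x y :=
  (exists_unique_pass A hmc hxy).exists.choose_spec

lemma eT_unique (hmc : IsMinCross A) {x y : Fin b} (hxy : x ≠ y) {s : Fin n}
    (hs : PassAt A s x y) : s = eT hmc hxy := by
  obtain ⟨a, ha, hu⟩ := exists_unique_pass A hmc hxy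
  rw [hu s hs, hu (eT hmc hxy) (eT_spec hmc hxy)]

lemma eT_fiber (hmc : IsMinCross A) {x y : Fin b} (hxy : x ≠ y) :
    eT hmc hxy ∈ fiber (BA A) x :=
  mem_fiber.mpr (eq_BA_of A (eT_spec hmc hxy).1).symm

lemma P_lt_iff (hmc : IsMinCross A) {x y : Fin b} (hxy : x ≠ y) (t : ℕ) :
    1 ≤ P A x y t ↔ (eT hmc hxy).val < t := by
  constructor
  · intro h
    unfold P at h
    have hpos : (Finset.univ.filter
        (fun s : Fin n => s.val < t ∧ PassAt A s x y)).Nonempty :=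
      Finset.card_pos.mp (by omega)
    obtain ⟨r, hr⟩ := hpos
    rw [Finset.mem_filter] at hr
    rw [← eT_unique hmc hxy hr.2.2]
    exact hr.2.1
  · intro h
    have hmem : eT hmc hxy ∈ Finset.univ.filter
        (fun s : Fin n => s.val < t ∧ PassAt A s x y) :=
      Finset.mem_filter.mpr ⟨Finset.mem_univ _, h, eT_spec hmc hxy⟩
    have := Finset.card_pos.mpr ⟨_, hmem⟩
    unfold P
    omega

lemma P_le_one (hmc : IsMinCross A) {x y : Fin b} (hxy : x ≠ y) (t : ℕ) (htn : t ≤ n) :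
    P A x y t ≤ 1 := by
  have h1 := P_mono A x y htn
  have h2 := pair_eq_one A hmc hxy
  omega

/-- position facts for a bottoming time of `y` (with `x < y`) -/
lemma fiber_y_facts (hmc : IsMinCross A) {x y : Fin b} (hxy : x < y) {s : Fin n}
    (hsf : s ∈ fiber (BA A) y) :
    (eT hmc (ne_of_lt hxy)).val < s.val ∧ s.val ≤ (eT hmc (ne_of_lt hxy).symm).val := by
  have hBs : BA A s = y := mem_fiber.mp hsf
  have hy0 : (stA A s.val y).val = 0 := by rw [← hBs]; exact BA_spec A s
  have hx0 : (stA A s.val x).val ≠ 0 := by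
    intro h
    have h1 : x = BA A s := eq_BA_of A h
    rw [hBs] at h1
    exact (ne_of_lt hxy) h1
  have hinv := belowInv A hxy s.val (le_of_lt s.isLt)
  have heq : P A x y s.val = P A y x s.val + 1 := by
    have hiff := hinv.2
    have hb1 := hinv.1.1
    have hb2 := hinv.1.2
    have : ¬ ((stA A s.val x).val < (stA A s.val y).val) := by omega
    omega
  constructor
  · rw [← P_lt_iff hmc (ne_of_lt hxy)]
    omega
  · by_contra hc
    push_neg at hc
    have h5 := (P_lt_iff hmc (ne_of_lt hxy).symm s.val).mpr hc
    have hle := P_le_one hmc (ne_of_lt hxy) s.val (le_of_lt s.isLt)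
    omega

/-- position facts for a bottoming time of `x` (with `x < y`) -/
lemma fiber_x_facts (hmc : IsMinCross A) {x y : Fin b} (hxy : x < y) {s : Fin n}
    (hsf : s ∈ fiber (BA A) x) :
    s.val ≤ (eT hmc (ne_of_lt hxy)).val ∨ (eT hmc (ne_of_lt hxy).symm).val < s.val := by
  have hBs : BA A s = x := mem_fiber.mp hsf
  have hx0 : (stA A s.val x).val = 0 := by rw [← hBs]; exact BA_spec A s
  have hy0 : (stA A s.val y).val ≠ 0 := by
    intro h
    exact (ne_of_lt hxy) (((eq_BA_of A hx0).trans (eq_BA_of A h).symm))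
  have hinv := belowInv A hxy s.val (le_of_lt s.isLt)
  have heq : P A x y s.val = P A y x s.val := by
    have hiff := hinv.2
    have : ((stA A s.val x).val < (stA A s.val y).val) := by omega
    exact hiff.mp this
  by_cases hcl : (eT hmc (ne_of_lt hxy)).val < s.val
  · right
    rw [← P_lt_iff hmc (ne_of_lt hxy).symm]
    have := (P_lt_iff hmc (ne_of_lt hxy) s.val).mpr hcl
    omega
  · left
    omega

lemma tau_eq_eT (hmc : IsMinCross A) {x y : Fin b} (hxy : x ≠ y) :
    tau (BA A) (hsA hmc) x y = eT hmc hxy := by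
  rcases hxy.lt_or_gt with h | h
  · -- x < y : the pass time lies in a gap of x before min (fiber y)
    apply tau_eq_of (eT_fiber hmc hxy)
    · rw [Fin.lt_def]
      exact (fiber_y_facts hmc h (mn_mem y)).1
    · intro s hsf hslt
      rcases fiber_x_facts hmc h hsf with h1 | h1
      · exact Fin.le_def.mpr h1
      · exfalso
        have h2 : (mn (BA A) (hsA hmc) y).val ≤ (eT hmc (Ne.symm hxy)).val :=
          (fiber_y_facts hmc h (mn_mem y)).2
        have h3 : s.val < (mn (BA A) (hsA hmc) y).val := Fin.lt_def.mp hslt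
        omega
  · -- y < x : pass time is max (fiber x), and no element of fiber x is below min (fiber y)
    have hyx : y < x := h
    have hmax : mx (BA A) (hsA hmc) x = eT hmc hxy := by
      apply le_antisymm
      · exact Fin.le_def.mpr (fiber_y_facts hmc hyx (mx_mem x)).2
      · exact le_mx (eT_fiber hmc hxy)
    have hempty : ∀ s ∈ fiber (BA A) x, ¬ s < mn (BA A) (hsA hmc) y := by
      intro s hsf hslt
      have h1 : (eT hmc (ne_of_lt hyx)).val < s.val := (fiber_y_facts hmc hyx hsf).1
      have h2 : (mn (BA A) (hsA hmc) y).val ≤ (eT hmc (ne_of_lt hyx)).val :=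
        Fin.le_def.mp (mn_le (eT_fiber hmc (ne_of_lt hyx)))
      have h4 : s.val < (mn (BA A) (hsA hmc) y).val := Fin.lt_def.mp hslt
      omega
    rw [tau_eq_mx hempty, hmax]

theorem psi_BA (hmc : IsMinCross A) : psi (BA A) (hsA hmc) = A := by
  funext t
  apply Fin.ext
  show mcount (BA A) (hsA hmc) t = (A t).val
  unfold mcount
  have hset : Finset.univ.filter
      (fun v => v ≠ BA A t ∧ tau (BA A) (hsA hmc) (BA A t) v = t)
      = Finset.univ.filter (fun v : Fin b =>
          1 ≤ (stA A t.val v).val ∧ (stA A t.val v).val ≤ (A t).val) := by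
    ext v
    simp only [Finset.mem_filter, Finset.mem_univ, true_and]
    constructor
    · rintro ⟨hne, htau⟩
      rw [tau_eq_eT hmc (Ne.symm hne)] at htau
      have hp := eT_spec hmc (Ne.symm hne)
      rw [htau] at hp
      exact ⟨hp.2.1, hp.2.2⟩
    · rintro ⟨h1, h2⟩
      have hne : v ≠ BA A t := by
        intro hcon
        have := BA_spec A t
        rw [← hcon] at this
        omega
      refine ⟨hne, ?_⟩
      have hp : PassAt A t (BA A t) v := ⟨BA_spec A t, h1, h2⟩
      rw [tau_eq_eT hmc (Ne.symm hne), ← eT_unique hmc (Ne.symm hne) hp]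
  rw [hset, interval_card A t.val (A t).isLt]

theorem isNCB_BA (hmc : IsMinCross A) : IsNCB (BA A) := by
  refine ⟨?_, ?_, ?_⟩
  · -- first occurrences in order
    intro t k hk
    have hne : k ≠ BA A t := ne_of_lt hk
    have hk0 : (stA A t.val k).val ≠ 0 := fun h => hne (eq_BA_of A h)
    have hu0 : (stA A t.val (BA A t)).val = 0 := BA_spec A t
    have hinv := belowInv A hk t.val (le_of_lt t.isLt)
    have h1 : 1 ≤ P A k (BA A t) t.val := by
      have hiff := hinv.2
      have hb1 := hinv.1.1
      have hb2 := hinv.1.2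
      have : ¬ ((stA A t.val k).val < (stA A t.val (BA A t)).val) := by omega
      omega
    have h2 := (P_lt_iff hmc hne t.val).mp h1
    refine ⟨eT hmc hne, Fin.lt_def.mpr h2, ?_⟩
    exact (eq_BA_of A (eT_spec hmc hne).1).symm
  · -- surjectivity
    intro k
    obtain ⟨t, ht⟩ := bottoms A hmc k
    exact ⟨t, (eq_BA_of A ht).symm⟩
  · -- noncrossing
    rintro ⟨s, t, u', v', h1, h2, h3, hsu, htv, hne⟩
    have hbots : (stA A s.val (BA A s)).val = 0 := BA_spec A s
    have hbott : (stA A t.val (BA A t)).val = 0 := BA_spec A t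
    have hbotu : (stA A u'.val (BA A s)).val = 0 := by rw [hsu]; exact BA_spec A u'
    have hbotv : (stA A v'.val (BA A t)).val = 0 := by rw [htv]; exact BA_spec A v'
    have hpq : (BA A s) ≠ (BA A t) := hne
    have hq_ne_s : (stA A s.val (BA A t)).val ≠ 0 := fun h => hpq ((eq_BA_of A hbots).trans (eq_BA_of A h).symm)
    have hp_ne_t : (stA A t.val (BA A s)).val ≠ 0 := fun h => hpq (((eq_BA_of A h).trans (eq_BA_of A hbott).symm))
    have hq_ne_u : (stA A u'.val (BA A t)).val ≠ 0 := fun h => hpq ((eq_BA_of A hbotu).trans (eq_BA_of A h).symm)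
    have hp_ne_v : (stA A v'.val (BA A s)).val ≠ 0 := fun h => hpq (((eq_BA_of A h).trans (eq_BA_of A hbotv).symm))
    have hmono1 : P A (BA A s) (BA A t) s.val ≤ P A (BA A s) (BA A t) t.val := P_mono A (BA A s) (BA A t) (le_of_lt (Fin.lt_def.mp h1))
    have hmono2 : P A (BA A s) (BA A t) t.val ≤ P A (BA A s) (BA A t) u'.val := P_mono A (BA A s) (BA A t) (le_of_lt (Fin.lt_def.mp h2))
    have hmono3 : P A (BA A s) (BA A t) u'.val ≤ P A (BA A s) (BA A t) v'.val := P_mono A (BA A s) (BA A t) (le_of_lt (Fin.lt_def.mp h3))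
    have hmono1' : P A (BA A t) (BA A s) s.val ≤ P A (BA A t) (BA A s) t.val := P_mono A (BA A t) (BA A s) (le_of_lt (Fin.lt_def.mp h1))
    have hmono2' : P A (BA A t) (BA A s) t.val ≤ P A (BA A t) (BA A s) u'.val := P_mono A (BA A t) (BA A s) (le_of_lt (Fin.lt_def.mp h2))
    have hmono3' : P A (BA A t) (BA A s) u'.val ≤ P A (BA A t) (BA A s) v'.val := P_mono A (BA A t) (BA A s) (le_of_lt (Fin.lt_def.mp h3))
    rcases hpq.lt_or_gt with hlt | hlt
    · -- p < q
      have hIs := belowInv A hlt s.val (le_of_lt s.isLt)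
      have hIt := belowInv A hlt t.val (le_of_lt t.isLt)
      have hIu := belowInv A hlt u'.val (le_of_lt u'.isLt)
      have hIv := belowInv A hlt v'.val (le_of_lt v'.isLt)
      have e2 : P A (BA A s) (BA A t) t.val = P A (BA A t) (BA A s) t.val + 1 := by
        have hiff := hIt.2; have hb1 := hIt.1.1; have hb2 := hIt.1.2
        have : ¬ ((stA A t.val (BA A s)).val < (stA A t.val (BA A t)).val) := by omega
        omega
      have e3 : P A (BA A s) (BA A t) u'.val = P A (BA A t) (BA A s) u'.val := by
        have hiff := hIu.2
        exact hiff.mp (by omega)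
      have e4 : P A (BA A s) (BA A t) v'.val = P A (BA A t) (BA A s) v'.val + 1 := by
        have hiff := hIv.2; have hb1 := hIv.1.1; have hb2 := hIv.1.2
        have : ¬ ((stA A v'.val (BA A s)).val < (stA A v'.val (BA A t)).val) := by omega
        omega
      have hle := P_le_one hmc (ne_of_lt hlt) v'.val (le_of_lt v'.isLt)
      omega
    · -- q < p
      have hIs := belowInv A hlt s.val (le_of_lt s.isLt)
      have hIt := belowInv A hlt t.val (le_of_lt t.isLt)
      have hIu := belowInv A hlt u'.val (le_of_lt u'.isLt)
      have e1 : P A (BA A t) (BA A s) s.val = P A (BA A s) (BA A t) s.val + 1 := by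
        have hiff := hIs.2; have hb1 := hIs.1.1; have hb2 := hIs.1.2
        have : ¬ ((stA A s.val (BA A t)).val < (stA A s.val (BA A s)).val) := by omega
        omega
      have e2 : P A (BA A t) (BA A s) t.val = P A (BA A s) (BA A t) t.val := by
        have hiff := hIt.2
        exact hiff.mp (by omega)
      have e3 : P A (BA A t) (BA A s) u'.val = P A (BA A s) (BA A t) u'.val + 1 := by
        have hiff := hIu.2; have hb1 := hIu.1.1; have hb2 := hIu.1.2
        have : ¬ ((stA A u'.val (BA A t)).val < (stA A u'.val (BA A s)).val) := by omega
        omega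
      have hle := P_le_one hmc (ne_of_lt hlt) u'.val (le_of_lt u'.isLt)
      omega

end Converse3



variable {b n : ℕ}

lemma hsNCB {B : Fin n → Fin b} (hB : IsNCB B) : ∀ u, (fiber B u).Nonempty := by
  intro u
  obtain ⟨t, ht⟩ := hB.2.1 u
  exact ⟨t, mem_fiber.mpr ht⟩

noncomputable def equivMinNCB (hn : 1 ≤ n) :
    {A : Fin n → Fin b // IsMinCross A} ≃ {B : Fin n → Fin b // IsNCB B} where
  toFun := fun A => ⟨BA A.1, isNCB_BA A.2⟩
  invFun := fun B => ⟨psi B.1 (hsNCB B.2), psi_isMinCross B.2 hn⟩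
  left_inv := fun A => Subtype.ext (psi_BA A.2)
  right_inv := fun B => Subtype.ext (by
    funext t
    symm
    apply eq_BA_of
    have h := psi_bottom (hs := hsNCB B.2) B.2.1 B.2.2.2 t
    rw [h])



variable {b n : ℕ}

def PartCond (b : ℕ) (P : Finset (Finset (Fin n))) : Prop :=
  P.card = b ∧ ∅ ∉ P ∧ (∀ x : Fin n, ∃! S, S ∈ P ∧ x ∈ S) ∧
    ¬ ∃ (w x y z : Fin n) (S T : Finset (Fin n)),
        S ∈ P ∧ T ∈ P ∧ S ≠ T ∧ w < x ∧ x < y ∧ y < z ∧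
        w ∈ S ∧ y ∈ S ∧ x ∈ T ∧ z ∈ T

section PartToB

variable {P : Finset (Finset (Fin n))}

/-- the block containing `x` -/
def blockOf (hP : PartCond b P) (x : Fin n) : Finset (Fin n) :=
  P.choose (fun S => x ∈ S) (hP.2.2.1 x)

lemma blockOf_mem (hP : PartCond b P) (x : Fin n) : blockOf hP x ∈ P :=
  Finset.choose_mem _ _ _

lemma mem_blockOf (hP : PartCond b P) (x : Fin n) : x ∈ blockOf hP x :=
  Finset.choose_property (fun S => x ∈ S) P (hP.2.2.1 x)

lemma blockOf_eq (hP : PartCond b P) {x : Fin n} {S : Finset (Fin n)}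
    (hS : S ∈ P) (hx : x ∈ S) : S = blockOf hP x := by
  obtain ⟨T, hT, hu⟩ := hP.2.2.1 x
  rw [hu S ⟨hS, hx⟩, hu (blockOf hP x) ⟨blockOf_mem hP x, mem_blockOf hP x⟩]

lemma block_nonempty (hP : PartCond b P) {S : Finset (Fin n)} (hS : S ∈ P) : S.Nonempty := by
  rw [Finset.nonempty_iff_ne_empty]
  intro h
  rw [h] at hS
  exact hP.2.1 hS

lemma min_inj (hP : PartCond b P) {S T : Finset (Fin n)} (hS : S ∈ P) (hT : T ∈ P)
    (h : S.min = T.min) : S = T := by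
  have hSne := block_nonempty hP hS
  have hTne := block_nonempty hP hT
  have h1 : (S.min' hSne : WithTop (Fin n)) = S.min := Finset.coe_min' hSne
  have h2 : (T.min' hTne : WithTop (Fin n)) = T.min := Finset.coe_min' hTne
  rw [← h1, ← h2] at h
  have h3 : S.min' hSne = T.min' hTne := WithTop.coe_injective h
  have h4 : S.min' hSne ∈ T := by rw [h3]; exact Finset.min'_mem _ _
  rw [blockOf_eq hP hS (Finset.min'_mem _ _), blockOf_eq hP hT h4]

/-- the set of block minima -/
def keys (P : Finset (Finset (Fin n))) : Finset (WithTop (Fin n)) :=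
  P.image (fun S => S.min)

lemma keys_card (hP : PartCond b P) : (keys P).card = b := by
  rw [keys, Finset.card_image_of_injOn, hP.1]
  intro S hS T hT h
  exact min_inj hP hS hT h

lemma mem_keys {a : WithTop (Fin n)} : a ∈ keys P ↔ ∃ S ∈ P, S.min = a := by
  unfold keys
  simp

lemma blockOf_min_mem (hP : PartCond b P) (x : Fin n) : (blockOf hP x).min ∈ keys P :=
  Finset.mem_image_of_mem _ (blockOf_mem hP x)

/-- the bottom-ball function of a noncrossing partition -/
noncomputable def BofP (hP : PartCond b P) (x : Fin n) : Fin b :=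
  ((keys P).orderIsoOfFin (keys_card hP)).symm ⟨(blockOf hP x).min, blockOf_min_mem hP x⟩

lemma BofP_iso (hP : PartCond b P) (x : Fin n) :
    (((keys P).orderIsoOfFin (keys_card hP)) (BofP hP x) : WithTop (Fin n))
      = (blockOf hP x).min := by
  rw [BofP, OrderIso.apply_symm_apply]

lemma BofP_eq_of_min (hP : PartCond b P) {x : Fin n} {k : Fin b}
    (h : (((keys P).orderIsoOfFin (keys_card hP)) k : WithTop (Fin n)) = (blockOf hP x).min) :
    BofP hP x = k := by
  rw [BofP, OrderIso.symm_apply_eq]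
  exact Subtype.ext h.symm

lemma blockOf_eq_of_BofP (hP : PartCond b P) {x y : Fin n}
    (h : BofP hP x = BofP hP y) : blockOf hP x = blockOf hP y := by
  apply min_inj hP (blockOf_mem hP x) (blockOf_mem hP y)
  rw [← BofP_iso hP x, ← BofP_iso hP y, h]

theorem isNCB_BofP (hP : PartCond b P) : IsNCB (BofP hP) := by
  refine ⟨?_, ?_, ?_⟩
  · -- first occurrence property
    intro t k hk
    have hmono : (((keys P).orderIsoOfFin (keys_card hP)) k : WithTop (Fin n))
        < ((keys P).orderIsoOfFin (keys_card hP)) (BofP hP t) := by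
      have := ((keys P).orderIsoOfFin (keys_card hP)).strictMono hk
      exact this
    rw [BofP_iso hP t] at hmono
    have hkmem : (((keys P).orderIsoOfFin (keys_card hP)) k : WithTop (Fin n)) ∈ keys P :=
      ((keys P).orderIsoOfFin (keys_card hP) k).2
    obtain ⟨T, hT, hTmin⟩ := mem_keys.mp hkmem
    have hTne := block_nonempty hP hT
    have hTmin' : (T.min' hTne : WithTop (Fin n)) = T.min := Finset.coe_min' hTne
    set s := T.min' hTne with hs
    have hblock : blockOf hP s = T := (blockOf_eq hP hT (Finset.min'_mem _ _)).symm
    refine ⟨s, ?_, ?_⟩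
    · -- s < t
      have h1 : (blockOf hP t).min ≤ (t : WithTop (Fin n)) :=
        Finset.min_le (mem_blockOf hP t)
      have h2 : ((s : Fin n) : WithTop (Fin n)) < (blockOf hP t).min := by
        rw [hTmin', hTmin]
        exact hmono
      have h3 := lt_of_lt_of_le h2 h1
      exact WithTop.coe_lt_coe.mp h3
    · -- BofP s = k
      apply BofP_eq_of_min
      rw [hblock, hTmin]
  · -- surjectivity
    intro k
    have hkmem : (((keys P).orderIsoOfFin (keys_card hP)) k : WithTop (Fin n)) ∈ keys P :=
      ((keys P).orderIsoOfFin (keys_card hP) k).2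
    obtain ⟨T, hT, hTmin⟩ := mem_keys.mp hkmem
    have hTne := block_nonempty hP hT
    refine ⟨T.min' hTne, ?_⟩
    apply BofP_eq_of_min
    rw [← (blockOf_eq hP hT (Finset.min'_mem _ hTne)), hTmin]
  · -- noncrossing
    rintro ⟨s, t, u, v, hst, htu, huv, hBsu, hBtv, hBne⟩
    have h1 : blockOf hP s = blockOf hP u := blockOf_eq_of_BofP hP hBsu
    have h2 : blockOf hP t = blockOf hP v := blockOf_eq_of_BofP hP hBtv
    have h3 : blockOf hP s ≠ blockOf hP t := by
      intro hcon
      apply hBne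
      apply BofP_eq_of_min
      rw [BofP_iso hP t, ← hcon]
    exact hP.2.2.2 ⟨s, t, u, v, blockOf hP s, blockOf hP t,
      blockOf_mem hP s, blockOf_mem hP t, h3, hst, htu, huv,
      mem_blockOf hP s, h1 ▸ mem_blockOf hP u, mem_blockOf hP t, h2 ▸ mem_blockOf hP v⟩

end PartToB

section BToPart

variable {B : Fin n → Fin b}

/-- the partition into fibers -/
def toP (B : Fin n → Fin b) : Finset (Finset (Fin n)) :=
  Finset.univ.image (fun k => fiber B k)

lemma fiber_injective (hB : IsNCB B) : Function.Injective (fiber B) := by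
  intro k k' h
  obtain ⟨t, ht⟩ := hsNCB hB k
  have : t ∈ fiber B k' := h ▸ ht
  rw [mem_fiber] at ht this
  rw [← ht, this]

theorem partCond_toP (hB : IsNCB B) : PartCond b (toP B) := by
  refine ⟨?_, ?_, ?_, ?_⟩
  · rw [toP, Finset.card_image_of_injective _ (fiber_injective hB), Finset.card_univ,
      Fintype.card_fin]
  · intro h
    rw [toP, Finset.mem_image] at h
    obtain ⟨k, -, hk⟩ := h
    obtain ⟨t, ht⟩ := hsNCB hB k
    rw [hk] at ht
    exact absurd ht (Finset.notMem_empty t)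
  · intro x
    refine ⟨fiber B (B x), ⟨Finset.mem_image_of_mem _ (Finset.mem_univ _),
      mem_fiber.mpr rfl⟩, ?_⟩
    rintro S ⟨hS, hxS⟩
    rw [toP, Finset.mem_image] at hS
    obtain ⟨k, -, rfl⟩ := hS
    rw [mem_fiber.mp hxS]
  · rintro ⟨w, x, y, z, S, T, hS, hT, hST, h1, h2, h3, hwS, hyS, hxT, hzT⟩
    rw [toP, Finset.mem_image] at hS hT
    obtain ⟨k, -, rfl⟩ := hS
    obtain ⟨k', -, rfl⟩ := hT
    exact hB.2.2 ⟨w, x, y, z, h1, h2, h3,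
      (mem_fiber.mp hwS).trans (mem_fiber.mp hyS).symm,
      (mem_fiber.mp hxT).trans (mem_fiber.mp hzT).symm,
      by rw [mem_fiber.mp hwS, mem_fiber.mp hxT]; exact fun h => hST (by rw [h])⟩

end BToPart



variable {b n : ℕ}

theorem BofP_toP {B : Fin n → Fin b} (hB : IsNCB B) :
    BofP (partCond_toP hB) = B := by
  funext t
  have hP' := partCond_toP hB
  have hfib_mem : fiber B (B t) ∈ toP B := Finset.mem_image_of_mem _ (Finset.mem_univ _)
  have hblock : blockOf hP' t = fiber B (B t) :=
    (blockOf_eq hP' hfib_mem (mem_fiber.mpr rfl)).symm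
  set f : Fin b → WithTop (Fin n) := fun k => (fiber B k).min with hf
  have hmono : StrictMono f := by
    intro k k' hkk'
    have h1 := (lt_iff_mn_lt (hs := hsNCB hB) hB.1).mp hkk'
    have h2 : (f k) = ((mn B (hsNCB hB) k : Fin n) : WithTop (Fin n)) :=
      (Finset.coe_min' _).symm
    have h3 : (f k') = ((mn B (hsNCB hB) k' : Fin n) : WithTop (Fin n)) :=
      (Finset.coe_min' _).symm
    rw [h2, h3]
    exact WithTop.coe_lt_coe.mpr h1
  have hfs : ∀ k, f k ∈ keys (toP B) := by
    intro k
    exact mem_keys.mpr ⟨fiber B k, Finset.mem_image_of_mem _ (Finset.mem_univ _), rfl⟩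
  have huniq := Finset.orderEmbOfFin_unique (keys_card hP') hfs hmono
  apply BofP_eq_of_min
  rw [Finset.coe_orderIsoOfFin_apply, ← congrFun huniq (B t), hblock]

theorem toP_BofP {P : Finset (Finset (Fin n))} (hP : PartCond b P) :
    toP (BofP hP) = P := by
  have hB' := isNCB_BofP hP
  have hsub : toP (BofP hP) ⊆ P := by
    intro S hS
    rw [toP, Finset.mem_image] at hS
    obtain ⟨k, -, rfl⟩ := hS
    obtain ⟨t, ht⟩ := hB'.2.1 k
    have hfib : fiber (BofP hP) k = blockOf hP t := by
      ext s
      rw [mem_fiber]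
      constructor
      · intro hs
        have h1 : BofP hP s = BofP hP t := by rw [hs, ht]
        have h2 := blockOf_eq_of_BofP hP h1
        rw [← h2]
        exact mem_blockOf hP s
      · intro hs
        have h2 : blockOf hP t = blockOf hP s := blockOf_eq hP (blockOf_mem hP t) hs
        rw [← ht]
        apply BofP_eq_of_min
        rw [BofP_iso hP t, h2]
    rw [hfib]
    exact blockOf_mem hP t
  apply Finset.eq_of_subset_of_card_le hsub
  rw [hP.1, (partCond_toP hB').1]

noncomputable def equivNCBPart :
    {B : Fin n → Fin b // IsNCB B} ≃ {P : Finset (Finset (Fin n)) // PartCond b P} where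
  toFun := fun B => ⟨toP B.1, partCond_toP B.2⟩
  invFun := fun P => ⟨BofP P.2, isNCB_BofP P.2⟩
  left_inv := fun B => Subtype.ext (BofP_toP B.2)
  right_inv := fun P => Subtype.ext (toP_BofP P.2)


end JCS

/-- The number of minimal crossing juggling card sequences with `b` balls and `n` cards
equals the number of non-crossing partitions of `{1,...,n}` into exactly `b` nonempty
blocks. -/
theorem stmt7 (b n : ℕ) (hb : 1 ≤ b) (hn : 1 ≤ n) :
    Nat.card {A : Fin n → Fin b // IsMinCross A} =
      Nat.card {P : Finset (Finset (Fin n)) //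
        P.card = b ∧ ∅ ∉ P ∧ (∀ x : Fin n, ∃! S, S ∈ P ∧ x ∈ S) ∧
        ¬ ∃ (w x y z : Fin n) (S T : Finset (Fin n)),
            S ∈ P ∧ T ∈ P ∧ S ≠ T ∧ w < x ∧ x < y ∧ y < z ∧
            w ∈ S ∧ y ∈ S ∧ x ∈ T ∧ z ∈ T} := by
  exact Nat.card_congr ((JCS.equivMinNCB hn).trans JCS.equivNCBPart)
end

section
/- For all natural numbers n, a, b with a ≤ b ≤ n, one has Σ_{k=a}^{min(b, n−b)} n! / ((k+a)! (k−a)! (b−k)! (n−b−k)!) = C(n, b+a) · C(n, b−a), where the sum is over all k for which k+a, k−a, b−k and n−b−k are all nonnegative. -/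
open Finset Nat

lemma term_eq (n a b k : ℕ) (hak : a ≤ k) (hkb : k ≤ b) (hknb : k ≤ n - b) (hbn : b ≤ n) :
    Nat.multinomial (Finset.univ : Finset (Fin 4)) ![k + a, k - a, b - k, n - b - k] =
      Nat.choose n (b + a) * (Nat.choose (n - b - a) (k - a) * Nat.choose (b + a) (b - k)) := by
  have hban : b + a ≤ n := by omega
  have hspec := Nat.multinomial_spec (Finset.univ : Finset (Fin 4)) ![k + a, k - a, b - k, n - b - k]
  simp only [Fin.prod_univ_four, Fin.sum_univ_four, Matrix.cons_val_zero, Matrix.cons_val_one,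
    Matrix.head_cons, Matrix.cons_val_two, Matrix.tail_cons, Matrix.cons_val_three] at hspec
  have hsum : k + a + (k - a) + (b - k) + (n - b - k) = n := by omega
  rw [hsum] at hspec
  have h1 : Nat.choose (b + a) (b - k) * (b - k)! * (k + a)! = (b + a)! := by
    have e : b + a - (b - k) = k + a := by omega
    have := Nat.choose_mul_factorial_mul_factorial (show b - k ≤ b + a by omega)
    rwa [e] at this
  have h2 : Nat.choose (n - b - a) (k - a) * (k - a)! * (n - b - k)! = (n - b - a)! := by
    have e : n - b - a - (k - a) = n - b - k := by omega
    have := Nat.choose_mul_factorial_mul_factorial (show k - a ≤ n - b - a by omega)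
    rwa [e] at this
  have h3 : Nat.choose n (b + a) * (b + a)! * (n - b - a)! = n ! := by
    have e : n - (b + a) = n - b - a := by omega
    have := Nat.choose_mul_factorial_mul_factorial hban
    rwa [e] at this
  have hP : 0 < (k + a)! * (k - a)! * (b - k)! * (n - b - k)! := by positivity
  have hR : Nat.choose n (b + a) * (Nat.choose (n - b - a) (k - a) * Nat.choose (b + a) (b - k)) *
      ((k + a)! * (k - a)! * (b - k)! * (n - b - k)!) = n ! := by
    calc Nat.choose n (b + a) * (Nat.choose (n - b - a) (k - a) * Nat.choose (b + a) (b - k)) *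
        ((k + a)! * (k - a)! * (b - k)! * (n - b - k)!)
        = Nat.choose n (b + a) * ((Nat.choose (b + a) (b - k) * (b - k)! * (k + a)!) *
          (Nat.choose (n - b - a) (k - a) * (k - a)! * (n - b - k)!)) := by ring
      _ = n ! := by rw [h1, h2, ← h3]; ring
  have hL : Nat.multinomial (Finset.univ : Finset (Fin 4)) ![k + a, k - a, b - k, n - b - k] *
      ((k + a)! * (k - a)! * (b - k)! * (n - b - k)!) = n ! := by
    rw [← hspec]; ring
  exact Nat.eq_of_mul_eq_mul_right hP (hL.trans hR.symm)

/-- `Σ_{k=a}^{min(b, n-b)} n! / ((k+a)! (k-a)! (b-k)! (n-b-k)!) = C(n, b+a) · C(n, b-a)`. -/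
theorem stmt9 (n a b : ℕ) (hab : a ≤ b) (hbn : b ≤ n) :
    ∑ k ∈ Finset.Icc a (min b (n - b)),
        Nat.multinomial (Finset.univ : Finset (Fin 4)) ![k + a, k - a, b - k, n - b - k] =
      Nat.choose n (b + a) * Nat.choose n (b - a) := by
  rcases le_or_gt (b + a) n with hban | hban
  · -- rewrite each term
    have hterm : ∀ k ∈ Finset.Icc a (min b (n - b)),
        Nat.multinomial (Finset.univ : Finset (Fin 4)) ![k + a, k - a, b - k, n - b - k] =
          Nat.choose n (b + a) * (Nat.choose (n - b - a) (k - a) * Nat.choose (b + a) (b - k)) := by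
      intro k hk
      rw [Finset.mem_Icc] at hk
      exact term_eq n a b k hk.1 (le_trans hk.2 (min_le_left _ _))
        (le_trans hk.2 (min_le_right _ _)) hbn
    rw [Finset.sum_congr rfl hterm, ← Finset.mul_sum]
    congr 1
    -- Vandermonde
    have hV : Nat.choose n (b - a) =
        ∑ i ∈ Finset.range (b - a + 1),
          Nat.choose (n - b - a) i * Nat.choose (b + a) (b - a - i) := by
      have e : n = (n - b - a) + (b + a) := by omega
      conv_lhs => rw [e]
      rw [Nat.add_choose_eq, Finset.Nat.sum_antidiagonal_eq_sum_range_succ_mk]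
    rw [hV]
    -- reindex range (b-a+1) as Icc a b
    have hre : ∑ i ∈ Finset.range (b - a + 1),
          Nat.choose (n - b - a) i * Nat.choose (b + a) (b - a - i)
        = ∑ k ∈ Finset.Icc a b,
          Nat.choose (n - b - a) (k - a) * Nat.choose (b + a) (b - k) := by
      rw [show Finset.Icc a b = Finset.Ico a (b + 1) by rw [Finset.Ico_add_one_right_eq_Icc],
        Finset.sum_Ico_eq_sum_range]
      apply Finset.sum_congr (by congr 1; omega)
      intro i _
      congr 1
      · congr 1; omega
      · congr 1; omega
    rw [hre]
    -- drop zero terms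
    refine Finset.sum_subset (fun k hk => ?_) (fun k hk hnk => ?_)
    · rw [Finset.mem_Icc] at hk ⊢
      exact ⟨hk.1, le_trans hk.2 (min_le_left _ _)⟩
    · rw [Finset.mem_Icc] at hk hnk
      have : n - b - a < k - a := by omega
      rw [Nat.choose_eq_zero_of_lt this, zero_mul]
  · rw [Finset.Icc_eq_empty (by omega), Finset.sum_empty,
      Nat.choose_eq_zero_of_lt (by omega), zero_mul]
end

section
/- For all integers b ≥ 2 and n ≥ 2, the following identity holds in the rational numbers: Σ_{i=1}^{b−1} Σ_{j=1}^{n−2} (1/(i(b−i))) · C(j, i−1) · C(j−1, i−1) · C(n−1−j, b−i−1) · C(n−2−j, b−i−1) = (2/b) · C(n−1, b−2) · C(n−2, b−1). -/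
/-!
Writing `N(m, k) = C(m, k) C(m, k-1) / m` for the Narayana numbers, the summand is
`N(j, i) N(n-1-j, b-i)`, so the double sum is a convolution of Narayana numbers. Their
generating function `F = ∑ₘ Nₘ(t) xᵐ`, with `Nₘ(t) = ∑ₖ N(m, k) tᵏ`, satisfies
`F = x (1 + F) (1 + t F)`; comparing coefficients of `xⁿ tᵇ` evaluates the convolution as
`N(n, b) - N(n-1, b) - N(n-1, b-1)`, which is the right-hand side.

The functional equation is derived from the closed form. The Narayana polynomials satisfy a
three-term recurrence, i.e. `F` solves a first-order linear differential equation. For any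
solution of that equation, the defect `Q` of the quadratic equation satisfies `x H Q' = K Q`
with `H(0) = -1` and `K(0) = 1`; comparing lowest-order terms gives `(n + 1) qₙ = 0`, so `Q = 0`.
-/

open Finset PowerSeries
open scoped Polynomial

theorem Nat.cast_choose_succ_right_eq {K : Type*} [Field K] [CharZero K] (n k : ℕ) :
    (n.choose (k + 1) : K) = n.choose k * (n - k) / (k + 1) := by
  rw [eq_div_iff (Nat.cast_add_one_ne_zero k)]
  rcases le_or_gt k n with h | h
  · exact_mod_cast Nat.choose_succ_right_eq n k
  · simp [Nat.choose_eq_zero_of_lt h, Nat.choose_eq_zero_of_lt (h.trans (Nat.lt_succ_self k))]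

theorem Nat.cast_choose_eq_succ_choose_mul_div {K : Type*} [Field K] [CharZero K] (n k : ℕ) :
    (n.choose k : K) = (n + 1).choose k * (n + 1 - k) / (n + 1) := by
  rw [eq_div_iff (Nat.cast_add_one_ne_zero n)]
  rcases le_or_gt k (n + 1) with h | h
  · exact_mod_cast Nat.choose_mul_succ_eq n k
  · simp [Nat.choose_eq_zero_of_lt h, Nat.choose_eq_zero_of_lt (Nat.lt_of_succ_lt h)]

theorem Finset.sum_Icc_one_eq_sum_range {M : Type*} [AddCommMonoid M] (f : ℕ → M) (n : ℕ) :
    ∑ i ∈ Icc 1 n, f i = ∑ k ∈ range n, f (k + 1) := by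
  rw [← Ico_add_one_right_eq_Icc, sum_Ico_eq_sum_range, Nat.add_sub_cancel]
  simp only [add_comm]

namespace PowerSeries

variable {R : Type*}

theorem coeff_X_mul_derivative [CommSemiring R] (f : R⟦X⟧) (n : ℕ) :
    coeff n (X * d⁄dX R f) = n * coeff n f := by
  rcases n with _ | n
  · simp
  · rw [coeff_succ_X_mul, coeff_derivative, mul_comm]
    push_cast
    ring

theorem X_mul_derivative_X_pow_mul [CommRing R] (n : ℕ) (S : R⟦X⟧) :
    X * d⁄dX R (X ^ n * S) = X ^ n * ((n : R⟦X⟧) * S + X * d⁄dX R S) := by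
  rw [Derivation.leibniz, derivative_pow, derivative_X, smul_eq_mul, smul_eq_mul]
  rcases n with _ | n
  · simp
  · push_cast
    ring

theorem eq_zero_of_X_mul_mul_derivative_eq_mul [CommRing R] [IsDomain R] {Q H K : R⟦X⟧}
    (hQ : X * H * d⁄dX R Q = K * Q) (hHK : ∀ n : ℕ, constantCoeff K ≠ n * constantCoeff H) :
    Q = 0 := by
  have hdvd : ∀ n, X ^ n ∣ Q := by
    intro n
    induction n with
    | zero => exact one_dvd Q
    | succ n ih =>
      obtain ⟨S, rfl⟩ := ih
      have hS : H * ((n : R⟦X⟧) * S + X * d⁄dX R S) = K * S := by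
        apply mul_left_cancel₀ (pow_ne_zero n (X_ne_zero (R := R)))
        linear_combination hQ - H * X_mul_derivative_X_pow_mul n S
      have hS0 : constantCoeff S = 0 := by
        have h0 := congrArg constantCoeff hS
        simp only [map_mul, map_add, map_natCast, constantCoeff_X, zero_mul, add_zero] at h0
        by_contra hne
        exact hHK n (mul_right_cancel₀ hne (by linear_combination -h0))
      rw [pow_succ]
      exact mul_dvd_mul_left _ (X_dvd_iff.mpr hS0)
  ext n
  simpa using X_pow_dvd_iff.mp (hdvd (n + 1)) n n.lt_succ_self

theorem eq_X_mul_one_add_mul_one_add_of_linear_ode [CommRing R] [IsDomain R] [CharZero R]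
    (a : R) {F : R⟦X⟧}
    (hF : X * (1 - 2 * (1 + C a) * X + (1 - C a) ^ 2 * X ^ 2) * d⁄dX R F
      = ((1 + C a) * X - 1) * F + 2 * X) :
    F = X * (1 + F) * (1 + C a * F) := by
  set Q := C a * X * F ^ 2 + ((1 + C a) * X - 1) * F + X with hQ
  set H := 2 * C a * X * F + (1 + C a) * X - 1 with hH
  suffices Q = 0 by linear_combination -this
  have hQ' : d⁄dX R Q = C a * F ^ 2 + 2 * C a * X * F * d⁄dX R F + (1 + C a) * F
      + ((1 + C a) * X - 1) * d⁄dX R F + 1 := by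
    simp only [hQ, map_add, map_sub, Derivation.leibniz, derivative_pow, derivative_C,
      derivative_X, Derivation.map_one_eq_zero, smul_eq_mul]
    ring
  -- `X * H * Q' - K * Q` is exactly the defect of `hF`.
  apply eq_zero_of_X_mul_mul_derivative_eq_mul (H := H) (K := H + 2 + 4 * C a * X ^ 2 * d⁄dX R F)
  · rw [hQ']
    linear_combination hF
  · intro n hn
    simp only [hH, map_add, map_sub, map_mul, map_pow, map_one, map_ofNat, constantCoeff_X,
      constantCoeff_C, mul_zero, zero_mul, add_zero, zero_sub] at hn
    exact Nat.cast_add_one_ne_zero (R := R) n (by linear_combination hn)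

end PowerSeries

/-- `narayana m k` is the Narayana number `N(m, k + 1)`. The shift makes the formula valid for
all `k` without a special case, and `narayana 0 k = 0` through `x / 0 = 0`. -/
def narayana (m k : ℕ) : ℚ := m.choose (k + 1) * m.choose k / m

theorem narayana_zero_left (k : ℕ) : narayana 0 k = 0 := by simp [narayana]

theorem narayana_of_le {m k : ℕ} (h : m ≤ k) : narayana m k = 0 := by
  simp [narayana, Nat.choose_eq_zero_of_lt (Nat.lt_succ_of_le h)]

theorem narayana_succ (m k : ℕ) :
    narayana (m + 1) k = (m + 1).choose k * m.choose k / (k + 1) := by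
  rw [narayana, Nat.cast_choose_eq_succ_choose_mul_div (K := ℚ) m k,
    Nat.cast_choose_succ_right_eq]
  push_cast
  field_simp

theorem narayana_add_two_sub (m c : ℕ) :
    narayana (m + 2) (c + 1) - narayana (m + 1) (c + 1) - narayana (m + 1) c
      = 2 / (c + 2) * (m + 1).choose c * m.choose (c + 1) := by
  simp only [narayana, Nat.cast_choose_succ_right_eq (K := ℚ)]
  rw [Nat.cast_choose_eq_succ_choose_mul_div (K := ℚ) m c,
    Nat.cast_choose_eq_succ_choose_mul_div (K := ℚ) (m + 1) c]
  push_cast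
  field_simp
  ring

noncomputable def narayanaPoly (m : ℕ) : ℚ[X] :=
  ∑ k ∈ range m, Polynomial.monomial k (narayana m k)

theorem coeff_narayanaPoly (m k : ℕ) : (narayanaPoly m).coeff k = narayana m k := by
  rw [narayanaPoly, Polynomial.finsetSum_coeff]
  simp only [Polynomial.coeff_monomial]
  rw [sum_ite_eq']
  split_ifs with h
  · rfl
  · exact (narayana_of_le (not_lt.mp (mem_range.not.mp h))).symm

theorem narayanaPoly_zero : narayanaPoly 0 = 0 := by simp [narayanaPoly]

theorem narayanaPoly_one : narayanaPoly 1 = 1 := by simp [narayanaPoly, narayana]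

theorem narayanaPoly_three_term (s : ℕ) :
    ((s : ℚ[X]) + 3) * narayanaPoly (s + 2) =
      (2 * (s : ℚ[X]) + 3) * (1 + Polynomial.X) * narayanaPoly (s + 1)
        - (s : ℚ[X]) * (1 - Polynomial.X) ^ 2 * narayanaPoly s := by
  rcases s with _ | s
  · simp [narayanaPoly, narayana, sum_range_succ, Polynomial.monomial_one_one_eq_X]
  have hrhs : (2 * ((s + 1 : ℕ) : ℚ[X]) + 3) * (1 + Polynomial.X) * narayanaPoly (s + 1 + 1)
        - ((s + 1 : ℕ) : ℚ[X]) * (1 - Polynomial.X) ^ 2 * narayanaPoly (s + 1)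
      = ((2 * s + 5 : ℕ) : ℚ[X]) * narayanaPoly (s + 2)
        + ((2 * s + 5 : ℕ) : ℚ[X]) * (Polynomial.X * narayanaPoly (s + 2))
        - ((s + 1 : ℕ) : ℚ[X]) * narayanaPoly (s + 1)
        + ((2 * s + 2 : ℕ) : ℚ[X]) * (Polynomial.X * narayanaPoly (s + 1))
        - ((s + 1 : ℕ) : ℚ[X]) * (Polynomial.X * (Polynomial.X * narayanaPoly (s + 1))) := by
    push_cast
    ring
  rw [hrhs, show ((s + 1 : ℕ) : ℚ[X]) + 3 = ((s + 4 : ℕ) : ℚ[X]) by push_cast; ring]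
  ext k
  rcases k with _ | _ | k <;>
    simp only [Polynomial.coeff_add, Polynomial.coeff_sub, Polynomial.coeff_natCast_mul,
      Polynomial.coeff_X_mul, Polynomial.coeff_X_mul_zero, coeff_narayanaPoly]
  all_goals
    simp only [narayana, Nat.cast_choose_succ_right_eq (K := ℚ), Nat.choose_zero_right]
    push_cast
  · field_simp
    ring
  · field_simp
    ring
  · rw [Nat.cast_choose_eq_succ_choose_mul_div (K := ℚ) (s + 1) k,
      Nat.cast_choose_eq_succ_choose_mul_div (K := ℚ) (s + 2) k]
    push_cast
    field_simp
    ring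

noncomputable def narayanaSeries : ℚ[X]⟦X⟧ := PowerSeries.mk narayanaPoly

theorem coeff_narayanaSeries (n : ℕ) : coeff n narayanaSeries = narayanaPoly n := coeff_mk _ _

theorem narayanaSeries_linear_ode :
    X * (1 - 2 * (1 + C (Polynomial.X : ℚ[X])) * X + (1 - C (Polynomial.X : ℚ[X])) ^ 2 * X ^ 2)
        * d⁄dX ℚ[X] narayanaSeries
      = ((1 + C (Polynomial.X : ℚ[X])) * X - 1) * narayanaSeries + 2 * X := by
  set D := d⁄dX ℚ[X] narayanaSeries
  have hlhs : X * (1 - 2 * (1 + C Polynomial.X) * X + (1 - C Polynomial.X) ^ 2 * X ^ 2) * D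
      = X * D - C (2 * (1 + Polynomial.X)) * (X * (X * D))
        + C ((1 - Polynomial.X) ^ 2) * (X * (X * (X * D))) := by
    simp only [map_mul, map_add, map_sub, map_pow, map_one, map_ofNat]
    ring
  have hrhs : ((1 + C Polynomial.X) * X - 1) * narayanaSeries + 2 * X
      = C (1 + Polynomial.X) * (X * narayanaSeries) - narayanaSeries + C 2 * X := by
    simp only [map_add, map_one, map_ofNat]
    ring
  have hD (n : ℕ) : coeff n (X * D) = n * narayanaPoly n := by
    rw [coeff_X_mul_derivative, coeff_narayanaSeries]
  rw [hlhs, hrhs]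
  refine PowerSeries.ext fun n => ?_
  rcases n with _ | _ | s <;>
    simp only [LinearMap.map_add, LinearMap.map_sub, coeff_C_mul, coeff_succ_X_mul,
      coeff_zero_X_mul, hD, coeff_narayanaSeries, coeff_X]
  · simp [narayanaPoly_zero]
  · simp [narayanaPoly_zero, narayanaPoly_one]
    ring
  · simp only [show s + 1 + 1 ≠ 1 by omega, if_false]
    push_cast
    linear_combination narayanaPoly_three_term s

theorem narayanaPoly_add_two (m : ℕ) :
    narayanaPoly (m + 2) = (1 + Polynomial.X) * narayanaPoly (m + 1)
      + Polynomial.X * ∑ p ∈ antidiagonal (m + 1), narayanaPoly p.1 * narayanaPoly p.2 := by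
  have hF : narayanaSeries = X + C (1 + Polynomial.X) * (X * narayanaSeries)
      + C Polynomial.X * (X * narayanaSeries ^ 2) := by
    rw [map_add, map_one]
    linear_combination eq_X_mul_one_add_mul_one_add_of_linear_ode _ narayanaSeries_linear_ode
  have h := congrArg (coeff (m + 2)) hF
  rw [map_add, map_add, coeff_C_mul, coeff_succ_X_mul, coeff_C_mul, coeff_succ_X_mul,
    sq, coeff_mul, coeff_X, if_neg (by omega), zero_add] at h
  simp only [coeff_narayanaSeries] at h
  linear_combination h

theorem sum_sum_narayana_mul_narayana (m c : ℕ) :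
    ∑ j ∈ range m, ∑ a ∈ range (c + 1), narayana (j + 1) a * narayana (m - j) (c - a)
      = narayana (m + 2) (c + 1) - narayana (m + 1) (c + 1) - narayana (m + 1) c := by
  have h := congrArg (Polynomial.coeff · (c + 1)) (narayanaPoly_add_two m)
  simp only [add_mul, one_mul, Polynomial.coeff_add, Polynomial.coeff_X_mul] at h
  simp only [Polynomial.finsetSum_coeff, Polynomial.coeff_mul, coeff_narayanaPoly] at h
  simp only [Nat.sum_antidiagonal_succ, Nat.sum_antidiagonal_eq_sum_range_succ_mk] at h
  rw [sum_range_succ _ m] at h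
  simp only [narayana_zero_left, Nat.sub_self, zero_mul, mul_zero, sum_const_zero, zero_add,
    add_zero] at h
  linear_combination -h

/-- A binomial coefficient identity over the rationals. -/
theorem stmt10 (b n : ℕ) (hb : 2 ≤ b) (hn : 2 ≤ n) :
    ∑ i ∈ Finset.Icc 1 (b - 1), ∑ j ∈ Finset.Icc 1 (n - 2),
        (1 : ℚ) / ((i * (b - i) : ℕ) : ℚ) * (Nat.choose j (i - 1) : ℚ) *
          (Nat.choose (j - 1) (i - 1) : ℚ) * (Nat.choose (n - 1 - j) (b - i - 1) : ℚ) *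
          (Nat.choose (n - 2 - j) (b - i - 1) : ℚ) =
      (2 : ℚ) / (b : ℚ) * (Nat.choose (n - 1) (b - 2) : ℚ) *
        (Nat.choose (n - 2) (b - 1) : ℚ) := by
  obtain ⟨c, rfl⟩ : ∃ c, b = c + 2 := ⟨b - 2, by omega⟩
  obtain ⟨m, rfl⟩ : ∃ m, n = m + 2 := ⟨n - 2, by omega⟩
  simp only [Nat.add_sub_cancel, show c + 2 - 1 = c + 1 by omega, show m + 2 - 1 = m + 1 by omega]
  push_cast
  rw [← narayana_add_two_sub, ← sum_sum_narayana_mul_narayana]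
  simp only [sum_Icc_one_eq_sum_range]
  rw [sum_comm]
  refine sum_congr rfl fun k hk => sum_congr rfl fun a ha => ?_
  obtain ⟨d, rfl⟩ : ∃ d, c = a + d := ⟨c - a, by rw [mem_range] at ha; omega⟩
  obtain ⟨e, rfl⟩ : ∃ e, m = k + e + 1 := ⟨m - k - 1, by rw [mem_range] at hk; omega⟩
  simp only [show a + d + 2 - (a + 1) = d + 1 by omega,
    show k + e + 1 + 1 - (k + 1) = e + 1 by omega, show k + e + 1 - (k + 1) = e by omega,
    show k + e + 1 - k = e + 1 by omega, show a + d - a = d by omega, Nat.add_sub_cancel,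
    narayana_succ]
  push_cast
  field_simp
end

section
/- For all integers n and b with 1 ≤ b ≤ n, one has Σ_{k=0}^{n−b} (−1)^{n−b−k} C(n+k, k+1) C(n−b, k) = C(n, b−1) (an identity of integers). -/
lemma stmt11_aux : ∀ (m n j : ℕ), m ≤ j →
    ∑ k ∈ Finset.range (m + 1),
        (-1 : ℤ) ^ (m - k) * (Nat.choose (n + k) j : ℤ) * (Nat.choose m k : ℤ) =
      (Nat.choose n (j - m) : ℤ) := by
  intro m
  induction m with
  | zero => intro n j _; simp
  | succ m ih =>
    intro n j hj
    have hmj : m ≤ j := Nat.le_of_succ_le hj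
    have split : ∀ k ∈ Finset.range (m + 2),
        (-1 : ℤ) ^ (m + 1 - k) * (Nat.choose (n + k) j : ℤ) * (Nat.choose (m+1) k : ℤ)
        = (-1 : ℤ) ^ (m + 1 - k) * (Nat.choose (n + k) j : ℤ) * (Nat.choose m k : ℤ)
          + (-1 : ℤ) ^ (m + 1 - k) * (Nat.choose (n + k) j : ℤ)
              * (if k = 0 then 0 else (Nat.choose m (k-1) : ℤ)) := by
      intro k _
      rcases k with _ | k
      · simp
      · simp [Nat.choose_succ_succ' m k]
        push_cast
        ring
    rw [Finset.sum_congr rfl split, Finset.sum_add_distrib]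
    have hA : ∑ k ∈ Finset.range (m + 2),
        (-1 : ℤ) ^ (m + 1 - k) * (Nat.choose (n + k) j : ℤ) * (Nat.choose m k : ℤ)
        = -(Nat.choose n (j - m) : ℤ) := by
      rw [Finset.sum_range_succ]
      have : (Nat.choose m (m+1) : ℤ) = 0 := by
        simp [Nat.choose_eq_zero_of_lt]
      rw [this, mul_zero, add_zero]
      have : ∀ k ∈ Finset.range (m + 1),
          (-1 : ℤ) ^ (m + 1 - k) * (Nat.choose (n + k) j : ℤ) * (Nat.choose m k : ℤ)
          = -((-1 : ℤ) ^ (m - k) * (Nat.choose (n + k) j : ℤ) * (Nat.choose m k : ℤ)) := by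
        intro k hk
        have hk' : k ≤ m := Nat.lt_succ_iff.mp (Finset.mem_range.mp hk)
        have : m + 1 - k = (m - k) + 1 := by omega
        rw [this, pow_succ]
        ring
      rw [Finset.sum_congr rfl this, Finset.sum_neg_distrib, ih n j hmj]
    have hB : ∑ k ∈ Finset.range (m + 2),
        (-1 : ℤ) ^ (m + 1 - k) * (Nat.choose (n + k) j : ℤ)
          * (if k = 0 then 0 else (Nat.choose m (k-1) : ℤ))
        = (Nat.choose (n+1) (j - m) : ℤ) := by
      rw [Finset.sum_range_succ']
      simp only [if_pos rfl, mul_zero, add_zero]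
      have : ∀ k ∈ Finset.range (m + 1),
          (-1 : ℤ) ^ (m + 1 - (k+1)) * (Nat.choose (n + (k+1)) j : ℤ)
            * (if k + 1 = 0 then 0 else (Nat.choose m (k+1-1) : ℤ))
          = (-1 : ℤ) ^ (m - k) * (Nat.choose ((n+1) + k) j : ℤ) * (Nat.choose m k : ℤ) := by
        intro k _
        have h1 : m + 1 - (k+1) = m - k := by omega
        have h2 : n + (k+1) = (n+1) + k := by omega
        simp [h1, h2]
      rw [Finset.sum_congr rfl this, ih (n+1) j hmj]
      simp
    rw [hA, hB]
    have h1 : j - m = (j - (m+1)) + 1 := by omega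
    rw [h1, Nat.choose_succ_succ]
    push_cast
    ring

/-- `Σ_{k=0}^{n-b} (-1)^{n-b-k} C(n+k, k+1) C(n-b, k) = C(n, b-1)`. -/
theorem stmt11 (n b : ℕ) (hb : 1 ≤ b) (hbn : b ≤ n) :
    ∑ k ∈ Finset.range (n - b + 1),
        (-1 : ℤ) ^ (n - b - k) * (Nat.choose (n + k) (k + 1) : ℤ) *
          (Nat.choose (n - b) k : ℤ) =
      (Nat.choose n (b - 1) : ℤ) := by
  have key := stmt11_aux (n - b) n (n - 1) (by omega)
  have hconv : ∀ k ∈ Finset.range (n - b + 1),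
      (-1 : ℤ) ^ (n - b - k) * (Nat.choose (n + k) (k + 1) : ℤ) *
          (Nat.choose (n - b) k : ℤ)
      = (-1 : ℤ) ^ (n - b - k) * (Nat.choose (n + k) (n - 1) : ℤ) *
          (Nat.choose (n - b) k : ℤ) := by
    intro k _
    have h : Nat.choose (n + k) (k + 1) = Nat.choose (n + k) (n - 1) := by
      rw [← Nat.choose_symm (by omega : k + 1 ≤ n + k)]
      congr 1
      omega
    rw [h]
  rw [Finset.sum_congr rfl hconv, key]
  have h : n - 1 - (n - b) = b - 1 := by omega
  rw [h]
end

section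
/- For all integers b ≥ 2 and 1 ≤ k ≤ b−1, the number of permutations σ of {1,...,b} that are a single cycle on all b elements (a cyclic permutation whose support is all of {1,...,b}) and satisfy σ(b−k+1) < σ(b−k+2) < ··· < σ(b) equals (b−1)!/k!; that is, k! times this count equals (b−1)!. Equivalently, the probability that a uniformly random b-cycle σ has L(σ) ≥ k is 1/k!. -/
open Equiv Function
open scoped Nat

/-!
Permutations `τ` of `U = {b-k+1, …, b}`, extended by the identity, act on the `b`-cycles by
conjugation. For `x ∈ U` let `n + 1` be the first time the forward `σ`-orbit of `x` leaves `U`, and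
give `x` the key `(n, σⁿ⁺¹ x)`, ordered lexicographically. Since `U` is an upper set, `σ` is
increasing on `U` iff its keys are; and conjugating by `τ` just transports the keys along `τ`,
because the landing points `σⁿ⁺¹ x` lie outside `U` and are fixed. So every orbit contains exactly
one cycle increasing on `U` (the one with sorted keys), reached from each member by exactly one `τ`,
whence `k! · #{b-cycles increasing on U} = #{b-cycles} = (b-1)!`.
-/

section Transversal

variable {G Y : Type*} [Group G] [MulAction G Y]

theorem MulAction.card_transversal_mul_card_eq_card {X S : Set Y} (hSX : S ⊆ X)
    (hX : ∀ g : G, ∀ x ∈ X, g • x ∈ X) (hS : ∀ x ∈ X, ∃ g : G, g • x ∈ S)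
    (hfree : ∀ g : G, ∀ s ∈ S, g • s ∈ S → g = 1) :
    Nat.card S * Nat.card G = Nat.card X := by
  rw [← Nat.card_prod]
  refine Nat.card_eq_of_bijective (fun p => ⟨p.2 • p.1.1, hX p.2 _ (hSX p.1.2)⟩) ⟨?_, ?_⟩
  · rintro ⟨s, g⟩ ⟨s', g'⟩ h
    have h' : g • (s : Y) = g' • (s' : Y) := congrArg Subtype.val h
    have hg : g'⁻¹ * g = 1 := hfree _ s s.2 (by rw [mul_smul, h', inv_smul_smul]; exact s'.2)
    obtain rfl : g' = g := inv_mul_eq_one.1 hg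
    obtain rfl : s = s' := Subtype.ext (smul_left_cancel _ h')
    rfl
  · rintro ⟨x, hx⟩
    obtain ⟨g, hg⟩ := hS x hx
    exact ⟨(⟨g • x, hg⟩, g⁻¹), Subtype.ext (inv_smul_smul g x)⟩

end Transversal

section Sorting

variable {β γ : Type*} [LinearOrder β] [LinearOrder γ]

theorem Equiv.Perm.eq_one_of_strictMono [WellFoundedLT β] {g : Perm β} (hg : StrictMono g) :
    g = 1 := by
  ext x
  exact congrArg (· x)
    (Subsingleton.elim (hg.orderIsoOfSurjective g g.surjective) (OrderIso.refl β))

theorem Function.Injective.exists_perm_strictMono_comp [Fintype β] {f : β → γ}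
    (hf : Injective f) : ∃ g : Perm β, StrictMono (f ∘ g) := by
  classical
  let o : β ≃o Set.range f := (Fintype.orderIsoFinOfCardEq β rfl).symm.trans
    (Fintype.orderIsoFinOfCardEq _ (Set.card_range_of_injective hf))
  refine ⟨o.toEquiv.trans (Equiv.ofInjective f hf).symm, fun x y hxy => ?_⟩
  simpa [Equiv.apply_ofInjective_symm] using o.strictMono hxy

end Sorting

namespace Equiv.Perm

section FullCycles

variable {α : Type*} [Fintype α] [DecidableEq α]

theorem isCycle_and_support_eq_univ_iff {σ : Perm α} :
    σ.IsCycle ∧ σ.support = Finset.univ ↔ σ.cycleType = {Fintype.card α} := by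
  constructor
  · rintro ⟨hc, hs⟩
    rw [hc.cycleType, hs, Finset.card_univ]
  · intro h
    refine ⟨card_cycleType_eq_one.1 (by rw [h]; rfl), Finset.eq_univ_of_card _ ?_⟩
    rw [← sum_cycleType, h, Multiset.sum_singleton]

theorem card_isCycle_and_support_eq_univ (h : 2 ≤ Fintype.card α) :
    Nat.card {σ : Perm α // σ.IsCycle ∧ σ.support = Finset.univ} = (Fintype.card α - 1)! := by
  simp_rw [isCycle_and_support_eq_univ_iff]
  rw [Nat.card_eq_fintype_card, Fintype.card_subtype, card_of_cycleType_singleton h le_rfl,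
    Nat.choose_self, mul_one]

end FullCycles

section ExitKey

variable {α : Type*} (U : Set α) (σ : Perm α)

def Escapes : Prop := ∀ x, ∃ n, (σ ^ (n + 1)) x ∉ U

-- `sInf ∅ = 0`, so this is meaningful only when `σ` escapes `U`.
noncomputable def exitTime (x : α) : ℕ := sInf {n | (σ ^ (n + 1)) x ∉ U}

noncomputable def exitPoint (x : α) : α := (σ ^ (exitTime U σ x + 1)) x

noncomputable def exitKey (x : α) : ℕ ×ₗ α := toLex (exitTime U σ x, exitPoint U σ x)

variable {U σ} {x y : α}

theorem exitTime_of_apply_notMem (hx : σ x ∉ U) : exitTime U σ x = 0 :=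
  Nat.sInf_eq_zero.2 (Or.inl (by simpa using hx))

theorem Escapes.exitPoint_notMem (hσ : Escapes U σ) (x : α) : exitPoint U σ x ∉ U :=
  Nat.sInf_mem (hσ x)

theorem Escapes.exitTime_of_apply_mem (hσ : Escapes U σ) (hx : σ x ∈ U) :
    exitTime U σ x = exitTime U σ (σ x) + 1 := by
  have hpos : 1 ≤ exitTime U σ x := by
    rw [Nat.one_le_iff_ne_zero, exitTime, Ne, Nat.sInf_eq_zero, not_or]
    exact ⟨by simpa using hx, Set.nonempty_iff_ne_empty.1 (hσ x)⟩
  simpa only [exitTime, pow_succ, Perm.mul_apply] using (Nat.sInf_add hpos).symm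

theorem Escapes.exitPoint_of_apply_mem (hσ : Escapes U σ) (hx : σ x ∈ U) :
    exitPoint U σ x = exitPoint U σ (σ x) := by
  rw [exitPoint, exitPoint, hσ.exitTime_of_apply_mem hx, pow_succ, Perm.mul_apply]

theorem exitKey_injective : Injective (exitKey U σ) := by
  intro x y h
  simp only [exitKey, exitPoint, toLex_inj, Prod.mk.injEq] at h
  rw [h.1] at h
  exact (σ ^ _).injective h.2

variable [LinearOrder α]

theorem exitKey_lt_exitKey_iff_of_notMem (hx : σ x ∉ U) (hy : σ y ∉ U) :
    exitKey U σ x < exitKey U σ y ↔ σ x < σ y := by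
  simp [exitKey, exitPoint, exitTime_of_apply_notMem, hx, hy, Prod.Lex.toLex_lt_toLex]

theorem Escapes.exitKey_lt_exitKey_of_notMem_of_mem (hσ : Escapes U σ) (hx : σ x ∉ U)
    (hy : σ y ∈ U) : exitKey U σ x < exitKey U σ y := by
  simp [exitKey, exitTime_of_apply_notMem hx, hσ.exitTime_of_apply_mem hy,
    Prod.Lex.toLex_lt_toLex]

theorem Escapes.exitKey_lt_exitKey_iff_of_mem (hσ : Escapes U σ) (hx : σ x ∈ U)
    (hy : σ y ∈ U) : exitKey U σ x < exitKey U σ y ↔ exitKey U σ (σ x) < exitKey U σ (σ y) := by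
  simp [exitKey, hσ.exitTime_of_apply_mem, hσ.exitPoint_of_apply_mem, hx, hy,
    Prod.Lex.toLex_lt_toLex]

end ExitKey

section Monotone

variable {α : Type*} [LinearOrder α] {U : Set α} {σ : Perm α}

theorem Escapes.strictMonoOn_exitKey (hU : IsUpperSet U) (hσ : Escapes U σ)
    (hmono : StrictMonoOn σ U) : StrictMonoOn (exitKey U σ) U := by
  intro x hx y hy hxy
  induction hn : exitTime U σ x using Nat.strong_induction_on generalizing x y with
  | _ n ih =>
    have hσxy := hmono hx hy hxy
    by_cases hσx : σ x ∈ U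
    · have hσy := hU hσxy.le hσx
      rw [hσ.exitKey_lt_exitKey_iff_of_mem hσx hσy]
      refine ih _ ?_ hσx hσy hσxy rfl
      rw [← hn, hσ.exitTime_of_apply_mem hσx]
      exact Nat.lt_succ_self _
    · by_cases hσy : σ y ∈ U
      · exact hσ.exitKey_lt_exitKey_of_notMem_of_mem hσx hσy
      · exact (exitKey_lt_exitKey_iff_of_notMem hσx hσy).2 hσxy

theorem Escapes.strictMonoOn_of_exitKey (hU : IsUpperSet U) (hσ : Escapes U σ)
    (hkey : StrictMonoOn (exitKey U σ) U) : StrictMonoOn σ U := by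
  intro x hx y hy hxy
  have hk := hkey hx hy hxy
  by_cases hσy : σ y ∈ U
  · by_cases hσx : σ x ∈ U
    · exact (hkey.lt_iff_lt hσx hσy).1 ((hσ.exitKey_lt_exitKey_iff_of_mem hσx hσy).1 hk)
    · exact lt_of_not_ge fun h => hσx (hU h hσy)
  · have hσx : σ x ∉ U := fun hσx =>
      (hσ.exitKey_lt_exitKey_of_notMem_of_mem hσy hσx).not_gt hk
    exact (exitKey_lt_exitKey_iff_of_notMem hσx hσy).1 hk

theorem Escapes.strictMonoOn_iff_exitKey (hU : IsUpperSet U) (hσ : Escapes U σ) :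
    StrictMonoOn σ U ↔ StrictMonoOn (exitKey U σ) U :=
  ⟨hσ.strictMonoOn_exitKey hU, hσ.strictMonoOn_of_exitKey hU⟩

end Monotone

section Conjugation

variable {α : Type*} (U : Set α) [DecidablePred (· ∈ U)]

abbrev subtypeConjAction : MulAction (Perm U) (Perm α) :=
  MulAction.compHom _ (ConjAct.toConjAct.toMonoidHom.comp ofSubtype)

attribute [local instance] subtypeConjAction

variable {U} {σ : Perm α}

theorem subtypeConj_smul_def (τ : Perm U) (σ : Perm α) :
    τ • σ = ofSubtype τ * σ * (ofSubtype τ)⁻¹ := rfl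

theorem subtypeConj_smul_pow_apply (τ : Perm U) (n : ℕ) (x : α) :
    ((τ • σ) ^ n) x = ofSubtype τ ((σ ^ n) (ofSubtype τ⁻¹ x)) := by
  rw [subtypeConj_smul_def, conj_pow, map_inv]
  rfl

theorem exitTime_subtypeConj_smul (τ : Perm U) (x : α) :
    exitTime U (τ • σ) x = exitTime U σ (ofSubtype τ⁻¹ x) := by
  simp only [exitTime, subtypeConj_smul_pow_apply, ofSubtype_apply_mem_iff_mem]

theorem Escapes.subtypeConj_smul (hσ : Escapes U σ) (τ : Perm U) : Escapes U (τ • σ) := by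
  intro x
  simpa only [subtypeConj_smul_pow_apply, ofSubtype_apply_mem_iff_mem] using hσ _

theorem Escapes.exitKey_subtypeConj_smul (hσ : Escapes U σ) (τ : Perm U) (x : α) :
    exitKey U (τ • σ) x = exitKey U σ (ofSubtype τ⁻¹ x) := by
  rw [exitKey, exitKey, exitPoint, exitTime_subtypeConj_smul, subtypeConj_smul_pow_apply,
    ← exitPoint, ofSubtype_apply_of_not_mem τ (hσ.exitPoint_notMem _)]

variable [LinearOrder α]

theorem Escapes.eq_one_of_strictMonoOn_subtypeConj_smul (hU : IsUpperSet U) (hσ : Escapes U σ)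
    [Finite U] {τ : Perm U} (hmono : StrictMonoOn σ U) (hmono' : StrictMonoOn (τ • σ) U) :
    τ = 1 := by
  have hkey := (hσ.strictMonoOn_iff_exitKey hU).1 hmono
  have hkey' := ((hσ.subtypeConj_smul τ).strictMonoOn_iff_exitKey hU).1 hmono'
  suffices StrictMono (τ⁻¹ : Perm U) from inv_eq_one.1 (eq_one_of_strictMono this)
  intro u v huv
  have h := hkey' u.2 v.2 huv
  rw [hσ.exitKey_subtypeConj_smul, hσ.exitKey_subtypeConj_smul, ofSubtype_apply_coe,
    ofSubtype_apply_coe] at h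
  exact (hkey.lt_iff_lt (τ⁻¹ u).2 (τ⁻¹ v).2).1 h

theorem Escapes.exists_strictMonoOn_subtypeConj_smul (hU : IsUpperSet U) (hσ : Escapes U σ)
    [Fintype U] : ∃ τ : Perm U, StrictMonoOn (τ • σ) U := by
  obtain ⟨g, hg⟩ := (exitKey_injective.comp Subtype.val_injective).exists_perm_strictMono_comp
    (f := fun u : U => exitKey U σ u)
  refine ⟨g⁻¹, ((hσ.subtypeConj_smul _).strictMonoOn_iff_exitKey hU).2 fun x hx y hy hxy => ?_⟩
  rw [hσ.exitKey_subtypeConj_smul, hσ.exitKey_subtypeConj_smul, inv_inv,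
    ofSubtype_apply_of_mem g hx, ofSubtype_apply_of_mem g hy]
  exact hg (Subtype.mk_lt_mk.2 hxy)

end Conjugation

section Counting

variable {α : Type*} [Fintype α] [DecidableEq α]

theorem IsCycle.escapes {σ : Perm α} (hc : σ.IsCycle) (hs : σ.support = Finset.univ)
    {U : Set α} {z : α} (hz : z ∉ U) : Escapes U σ := by
  have hmove : ∀ y, σ y ≠ y := fun y => mem_support.1 (hs ▸ Finset.mem_univ y)
  intro x
  obtain ⟨i, hi⟩ := hc.exists_pow_eq (hmove (σ x)) (hmove z)
  exact ⟨i, by rwa [pow_succ, Perm.mul_apply, hi]⟩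

variable [LinearOrder α]

attribute [local instance] subtypeConjAction

theorem card_isCycle_strictMonoOn_mul_factorial {U : Set α} [DecidablePred (· ∈ U)]
    (hU : IsUpperSet U) {z : α} (hz : z ∉ U) (h2 : 2 ≤ Fintype.card α) :
    Nat.card {σ : Perm α // σ.IsCycle ∧ σ.support = Finset.univ ∧ StrictMonoOn σ U} *
      (Fintype.card U)! = (Fintype.card α - 1)! := by
  let X : Set (Perm α) := {σ | σ.IsCycle ∧ σ.support = Finset.univ}
  have hX : ∀ τ : Perm U, ∀ σ ∈ X, τ • σ ∈ X := fun τ σ hσ =>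
    ⟨hσ.1.conj, by rw [subtypeConj_smul_def, support_conj, hσ.2, Finset.map_univ_equiv]⟩
  rw [← Fintype.card_perm, ← Nat.card_eq_fintype_card, ← card_isCycle_and_support_eq_univ h2]
  refine MulAction.card_transversal_mul_card_eq_card (X := X)
    (S := {σ | σ.IsCycle ∧ σ.support = Finset.univ ∧ StrictMonoOn σ U})
    (fun σ hσ => ⟨hσ.1, hσ.2.1⟩) hX (fun σ hσ => ?_) (fun τ σ hσ hτσ => ?_)
  · obtain ⟨τ, hτ⟩ := (hσ.1.escapes hσ.2 hz).exists_strictMonoOn_subtypeConj_smul hU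
    exact ⟨τ, (hX τ σ hσ).1, (hX τ σ hσ).2, hτ⟩
  · exact (hσ.1.escapes hσ.2.1 hz).eq_one_of_strictMonoOn_subtypeConj_smul hU hσ.2.2 hτσ.2.2

end Counting

end Equiv.Perm

theorem stmt14_general (b k : ℕ) (hb : 2 ≤ b) (hkb : k ≤ b - 1) :
    Nat.factorial k *
        Nat.card {σ : Equiv.Perm (Fin b) //
          σ.IsCycle ∧ σ.support = Finset.univ ∧
            ∀ i j : Fin b, b - k ≤ i.val → i < j → σ i < σ j} =
      Nat.factorial (b - 1) := by
  let U : Set (Fin b) := {x | b - k ≤ x.val}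
  have hU : IsUpperSet U := fun x y (hxy : x ≤ y) (hx : b - k ≤ x.val) =>
    show b - k ≤ y.val from hx.trans hxy
  have hlow : (⟨0, by omega⟩ : Fin b) ∉ U := fun h : b - k ≤ 0 => by omega
  have hcardU : Fintype.card U = k := by
    simp_rw [U, Set.coe_ofPred, ← not_lt]
    rw [Fintype.card_subtype_compl, Fintype.card_fin, Fintype.card_subtype, Fin.card_filter_val_lt]
    omega
  have hcount := Perm.card_isCycle_strictMonoOn_mul_factorial hU hlow (by rwa [Fintype.card_fin])
  rw [hcardU, Fintype.card_fin] at hcount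
  rw [mul_comm, ← hcount]
  congr 1
  refine Nat.card_congr (subtypeEquivRight fun σ => and_congr_right' (and_congr_right' ?_))
  exact ⟨fun h i hi j _ hij => h i j hi hij, fun h i j hi hij => h hi (hU hij.le hi) hij⟩

/-- The number of permutations `σ` of `{1,...,b}` that are a single cycle on all `b`
elements and satisfy `σ(b-k+1) < ⋯ < σ(b)` equals `(b-1)!/k!`; i.e. `k!` times this count
equals `(b-1)!`. -/
theorem stmt14 (b k : ℕ) (hb : 2 ≤ b) (hk : 1 ≤ k) (hkb : k ≤ b - 1) :
    Nat.factorial k *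
        Nat.card {σ : Equiv.Perm (Fin b) //
          σ.IsCycle ∧ σ.support = Finset.univ ∧
            ∀ i j : Fin b, b - k ≤ i.val → i < j → σ i < σ j} =
      Nat.factorial (b - 1) :=
  stmt14_general b k hb hkb
end
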